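/- arXiv:2307.14080 — 9 statements merged into one kernel-verified Lean document; each statement's English description precedes it below -/
import Mathlib

section
/- For every real number α > 1, the quantity q^(1 − 1/α) · ∫₀¹ 1/(xᵅ + q) dx tends, as q → 0⁺, to the finite positive limit ∫₀^∞ 1/(yᵅ + 1) dy; in particular ∫₀¹ 1/(xᵅ + q) dx = Θ(q^(−1 + 1/α)) as q → 0⁺. -/
open MeasureTheory Filter Topology

/-- `I = Θ(R)` as `q → 0⁺`: there exist constants `0 < c ≤ C` and `q₀ > 0` such that
`c·R q ≤ I q ≤ C·R q` for all `0 < q < q₀`. -/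
def IsThetaAtZero (I R : ℝ → ℝ) : Prop :=
  ∃ c C q₀ : ℝ, 0 < c ∧ c ≤ C ∧ 0 < q₀ ∧
    ∀ q : ℝ, 0 < q → q < q₀ → c * R q ≤ I q ∧ I q ≤ C * R q

section Aux
open Set
open scoped ENNReal

private lemma g_integrable (α : ℝ) (hα : 1 < α) :
    IntegrableOn (fun y : ℝ => 1 / (y ^ α + 1)) (Ioi 0) := by
  have hmeas : Measurable fun y : ℝ => 1 / (y ^ α + 1) := by measurability
  have h1 : IntegrableOn (fun y : ℝ => 1 / (y ^ α + 1)) (Ioc 0 1) := by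
    refine Integrable.mono' (integrable_const 1) hmeas.aestronglyMeasurable ?_
    refine ae_restrict_of_forall_mem measurableSet_Ioc fun y hy => ?_
    have h0 : (0:ℝ) ≤ y ^ α := Real.rpow_nonneg hy.1.le α
    rw [Real.norm_eq_abs, abs_of_nonneg (by positivity)]
    rw [div_le_one (by linarith)]; linarith
  have h2 : IntegrableOn (fun y : ℝ => 1 / (y ^ α + 1)) (Ioi 1) := by
    refine Integrable.mono' (integrableOn_Ioi_rpow_of_lt (by linarith : -α < -1) one_pos)
      hmeas.aestronglyMeasurable ?_
    refine ae_restrict_of_forall_mem measurableSet_Ioi fun y hy => ?_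
    have hy0 : (0:ℝ) < y := lt_trans one_pos hy
    have h0 : (0:ℝ) < y ^ α := Real.rpow_pos_of_pos hy0 α
    rw [Real.norm_eq_abs, abs_of_nonneg (by positivity), Real.rpow_neg hy0.le,
      one_div, inv_le_inv₀ (by linarith) h0]
    linarith
  have : Ioi (0:ℝ) = Ioc 0 1 ∪ Ioi 1 := (Ioc_union_Ioi_eq_Ioi one_pos.le).symm
  rw [this]
  exact h1.union h2

private lemma g_pos (α : ℝ) (hα : 1 < α) :
    0 < ∫ y in Ioi (0:ℝ), 1 / (y ^ α + 1) := by
  rw [setIntegral_pos_iff_support_of_nonneg_ae]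
  · have : Ioi (0:ℝ) ⊆ Function.support (fun y : ℝ => 1 / (y ^ α + 1)) ∩ Ioi 0 := by
      intro y hy
      refine ⟨?_, hy⟩
      have : (0:ℝ) < y ^ α := Real.rpow_pos_of_pos hy α
      simp only [Function.mem_support]
      positivity
    calc (0:ℝ≥0∞) < volume (Ioi (0:ℝ)) := by simp
      _ ≤ _ := measure_mono this
  · refine ae_restrict_of_forall_mem measurableSet_Ioi fun y hy => ?_
    have : (0:ℝ) < y ^ α := Real.rpow_pos_of_pos hy α
    positivity
  · exact g_integrable α hα

private lemma key_eq (α : ℝ) (hα : 1 < α) {q : ℝ} (hq : 0 < q) :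
    q ^ (1 - 1/α) * ∫ x in (0:ℝ)..1, 1 / (x ^ α + q)
      = ∫ y in (0:ℝ)..(q ^ (-1/α)), 1 / (y ^ α + 1) := by
  have hα0 : (0:ℝ) < α := by linarith
  set c : ℝ := q ^ (1/α) with hc
  have hcpos : 0 < c := Real.rpow_pos_of_pos hq _
  have hinv : c⁻¹ = q ^ (-1/α) := by
    rw [hc, ← Real.rpow_neg hq.le]; ring_nf
  have hsub : (∫ y in (0:ℝ)..c⁻¹, (fun x => 1 / (x ^ α + q)) (c * y))
      = c⁻¹ • ∫ x in (0:ℝ)..1, 1 / (x ^ α + q) := by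
    have := intervalIntegral.integral_comp_mul_left (a:=0) (b:=c⁻¹)
      (fun x => 1 / (x ^ α + q)) hcpos.ne'
    simpa [mul_inv_cancel₀ hcpos.ne'] using this
  have hcong : (∫ y in (0:ℝ)..c⁻¹, (fun x => 1 / (x ^ α + q)) (c * y))
      = ∫ y in (0:ℝ)..c⁻¹, q⁻¹ * (1 / (y ^ α + 1)) := by
    refine intervalIntegral.integral_congr fun y hy => ?_
    have hy0 : 0 ≤ y := by
      rcases hy with ⟨h1, _⟩
      simpa [min_eq_left (inv_nonneg.2 hcpos.le)] using h1
    have : (c * y) ^ α = q * y ^ α := by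
      rw [Real.mul_rpow hcpos.le hy0, hc, ← Real.rpow_mul hq.le,
        one_div, inv_mul_cancel₀ hα0.ne', Real.rpow_one]
    simp only [this]
    have hd : (0:ℝ) < y ^ α + 1 := by positivity
    field_simp
  have hI : ∫ y in (0:ℝ)..c⁻¹, q⁻¹ * (1 / (y ^ α + 1))
      = q⁻¹ * ∫ y in (0:ℝ)..c⁻¹, 1 / (y ^ α + 1) := by
    rw [← intervalIntegral.integral_const_mul]
  have := hsub.symm.trans (hcong.trans hI)
  rw [smul_eq_mul] at this
  have h2 : ∫ x in (0:ℝ)..1, 1 / (x ^ α + q)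
      = c * (q⁻¹ * ∫ y in (0:ℝ)..c⁻¹, 1 / (y ^ α + 1)) := by
    field_simp at this ⊢
    linarith [this]
  rw [h2, hinv.symm]
  have : q ^ (1 - 1/α) * (c * q⁻¹) = 1 := by
    rw [hc, ← Real.rpow_neg_one q, ← Real.rpow_add hq, ← Real.rpow_add hq,
      show (1 - 1/α + (1/α + -1)) = (0:ℝ) by ring, Real.rpow_zero]
  calc q ^ (1 - 1/α) * (c * (q⁻¹ * ∫ y in (0:ℝ)..c⁻¹, 1 / (y ^ α + 1)))
      = (q ^ (1 - 1/α) * (c * q⁻¹)) * ∫ y in (0:ℝ)..c⁻¹, 1 / (y ^ α + 1) := by ring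
    _ = _ := by rw [this, one_mul]

private lemma g_tendsto (α : ℝ) (hα : 1 < α) :
    Tendsto (fun q : ℝ => ∫ y in (0:ℝ)..(q ^ (-1/α)), 1 / (y ^ α + 1))
      (𝓝[>] (0:ℝ)) (𝓝 (∫ y in Ioi (0:ℝ), 1 / (y ^ α + 1))) := by
  refine intervalIntegral_tendsto_integral_Ioi 0 (g_integrable α hα) ?_
  have h1 : Tendsto (fun q : ℝ => q ^ (1/α)) (𝓝[>] (0:ℝ)) (𝓝[>] 0) := by
    refine tendsto_nhdsWithin_of_tendsto_nhds_of_eventually_within _ ?_ ?_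
    · have := (Real.continuousAt_rpow_const 0 (1/α) (Or.inr (by positivity))).tendsto
      rw [Real.zero_rpow (by positivity : (1:ℝ)/α ≠ 0)] at this
      exact this.mono_left nhdsWithin_le_nhds
    · filter_upwards [self_mem_nhdsWithin] with q hq
      exact Real.rpow_pos_of_pos hq _
  have h2 : Tendsto (fun q : ℝ => (q ^ (1/α))⁻¹) (𝓝[>] (0:ℝ)) atTop :=
    tendsto_inv_nhdsGT_zero.comp h1
  refine h2.congr' ?_
  filter_upwards [self_mem_nhdsWithin] with q hq
  rw [← Real.rpow_neg (le_of_lt hq), neg_div]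

end Aux

/-- For every real `α > 1`, the quantity `q^(1 − 1/α) · ∫₀¹ 1/(x^α + q) dx`
tends, as `q → 0⁺`, to the finite positive limit `∫₀^∞ 1/(y^α + 1) dy`; in particular
`∫₀¹ 1/(x^α + q) dx = Θ(q^(−1 + 1/α))` as `q → 0⁺`. -/
theorem variance_tool_function_alpha_gt_one (α : ℝ) (hα : 1 < α) :
    (0 < ∫ y in Set.Ioi (0:ℝ), 1 / (y ^ α + 1)) ∧
    Tendsto (fun q : ℝ => q ^ (1 - 1/α) * ∫ x in (0:ℝ)..1, 1 / (x ^ α + q))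
      (𝓝[>] (0:ℝ)) (𝓝 (∫ y in Set.Ioi (0:ℝ), 1 / (y ^ α + 1))) ∧
    IsThetaAtZero (fun q : ℝ => ∫ x in (0:ℝ)..1, 1 / (x ^ α + q))
      (fun q : ℝ => q ^ (-1 + 1/α)) := by
  set L : ℝ := ∫ y in Set.Ioi (0:ℝ), 1 / (y ^ α + 1) with hL
  have hLpos : 0 < L := g_pos α hα
  have htend : Tendsto (fun q : ℝ => q ^ (1 - 1/α) * ∫ x in (0:ℝ)..1, 1 / (x ^ α + q))
      (𝓝[>] (0:ℝ)) (𝓝 L) := by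
    refine (g_tendsto α hα).congr' ?_
    filter_upwards [self_mem_nhdsWithin] with q hq
    exact (key_eq α hα hq).symm
  refine ⟨hLpos, htend, ?_⟩
  -- Θ part
  have hev : ∀ᶠ q in 𝓝[>] (0:ℝ),
      (fun q : ℝ => q ^ (1 - 1/α) * ∫ x in (0:ℝ)..1, 1 / (x ^ α + q)) q ∈ Set.Ioo (L/2) (2*L) :=
    htend (Ioo_mem_nhds (by linarith) (by linarith))
  rw [(nhdsGT_basis (0:ℝ)).eventually_iff] at hev
  obtain ⟨q₀, hq₀, hq₀'⟩ := hev
  refine ⟨L/2, 2*L, q₀, by linarith, by linarith, hq₀, fun q hq hqlt => ?_⟩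
  have hmem := hq₀' ⟨hq, hqlt⟩
  have hpow : 0 < q ^ (-1 + 1/α) := Real.rpow_pos_of_pos hq _
  have hprod : q ^ (-1 + 1/α) * q ^ (1 - 1/α) = 1 := by
    rw [← Real.rpow_add hq, show (-1 + 1/α + (1 - 1/α)) = (0:ℝ) by ring, Real.rpow_zero]
  have hIq : (∫ x in (0:ℝ)..1, 1 / (x ^ α + q))
      = q ^ (-1 + 1/α) * (q ^ (1 - 1/α) * ∫ x in (0:ℝ)..1, 1 / (x ^ α + q)) := by
    rw [← mul_assoc, hprod, one_mul]
  constructor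
  · show L/2 * q ^ (-1 + 1/α) ≤ ∫ x in (0:ℝ)..1, 1 / (x ^ α + q)
    rw [hIq, mul_comm (L/2)]
    exact mul_le_mul_of_nonneg_left hmem.1.le hpow.le
  · show (∫ x in (0:ℝ)..1, 1 / (x ^ α + q)) ≤ 2*L * q ^ (-1 + 1/α)
    rw [hIq, mul_comm (2*L)]
    exact mul_le_mul_of_nonneg_left hmem.2.le hpow.le
end

section
/- Let f : [0,1] → ℝ be given by a convergent power series f(x) = −∑_{n=1}^∞ aₙ xⁿ on [0,1] with a₁ > 0 and f(x) < 0 for all x ∈ (0,1]. Then ∫₀¹ 1/(−f(x) + q) dx = Θ(−log q) as q → 0⁺. -/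
/-!
Since `a 0 = 0`, we have `-f x = x * F x` with `F x = ∑ a (n + 1) * x ^ n`. The series `F` is
continuous on `[0, 1]` (uniform convergence on `[0, r]` for `r < 1`, Abel's theorem at `1`) and
positive there (`F 0 = a 1`, and `F x = -f x / x` otherwise), so `k * x ≤ -f x ≤ K * x` on `[0, 1]`
for some `0 < k ≤ K`. The integral is thus squeezed between `∫₀¹ dx / (K x + q)` and
`∫₀¹ dx / (k x + q)`, and `∫₀¹ dx / (λ x + q) = λ⁻¹ log ((λ + q) / q)` is of order `-log q`.
-/

open MeasureTheory Filter Topology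

open Set Real

section PowerSeries

variable {c : ℕ → ℝ} {x y : ℝ}

theorem summable_coeff_succ_mul_pow (hs : Summable fun n => c n * x ^ n) :
    Summable fun n => c (n + 1) * x ^ n := by
  rcases eq_or_ne x 0 with rfl | hx
  · exact summable_of_ne_finset_zero (s := {0}) fun n hn => by
      simp [zero_pow (Finset.notMem_singleton.mp hn)]
  · refine (((summable_nat_add_iff 1).mpr hs).mul_left x⁻¹).congr fun n => ?_
    field_simp
    ring

theorem mul_tsum_coeff_succ_mul_pow (hc : c 0 = 0) (hs : HasSum (fun n => c n * x ^ n) y) :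
    x * ∑' n, c (n + 1) * x ^ n = y := by
  have hshift : HasSum (fun n => c (n + 1) * x ^ (n + 1)) (x * ∑' n, c (n + 1) * x ^ n) :=
    ((summable_coeff_succ_mul_pow hs.summable).hasSum.mul_left x).congr_fun fun n => by ring
  simpa [hc] using ((hasSum_nat_add_iff (f := fun n => c n * x ^ n) 1).mp hshift).unique hs

theorem continuousOn_closedBall_tsum_mul_pow {B r : ℝ} (hB : ∀ n, |c n| ≤ B) (hr : r < 1) :
    ContinuousOn (fun x => ∑' n, c n * x ^ n) (Metric.closedBall 0 r) := by
  rcases lt_or_ge r 0 with hr0 | hr0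
  · simp [Metric.closedBall_eq_empty.mpr hr0]
  refine continuousOn_tsum (u := fun n => B * r ^ n) (fun n => by fun_prop)
    ((summable_geometric_of_lt_one hr0 hr).mul_left B) fun n x hx => ?_
  rw [norm_mul, norm_pow]
  have hx : ‖x‖ ≤ r := by simpa using hx
  exact mul_le_mul (hB n) (pow_le_pow_left₀ (norm_nonneg x) hx n) (by positivity)
    ((abs_nonneg _).trans (hB n))

theorem continuousOn_Icc_of_hasSum_mul_pow {h : ℝ → ℝ}
    (hs : ∀ x ∈ Icc (0 : ℝ) 1, HasSum (fun n => c n * x ^ n) (h x)) :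
    ContinuousOn h (Icc 0 1) := by
  have hc : HasSum c (h 1) := by simpa using hs 1 (right_mem_Icc.mpr zero_le_one)
  obtain ⟨B, hB⟩ := hc.summable.tendsto_atTop_zero.abs.bddAbove_range
  have hB' : ∀ n, |c n| ≤ B := fun n => hB (mem_range_self n)
  refine ContinuousOn.congr (f := fun x => ∑' n, c n * x ^ n) (fun x hx => ?_)
    fun x hx => (hs x hx).tsum_eq.symm
  rcases hx.2.lt_or_eq with hx1 | rfl
  · have hxr : x < (x + 1) / 2 := by linarith
    refine ((continuousOn_closedBall_tsum_mul_pow hB' (by linarith : (x + 1) / 2 < 1)) x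
      (by simp [abs_of_nonneg hx.1, hxr.le])).mono_of_mem_nhdsWithin ?_
    refine mem_of_superset (inter_mem_nhdsWithin _ (Iio_mem_nhds hxr)) fun y hy => ?_
    simp [abs_of_nonneg hy.1.1, (mem_Iio.mp hy.2).le]
  · refine (continuousWithinAt_Iio_iff_Iic.mp ?_).mono fun y hy => hy.2
    simpa [ContinuousWithinAt, hc.tsum_eq] using
      Real.tendsto_tsum_powerSeries_nhdsWithin_lt hc.tendsto_sum_nat

end PowerSeries

section Integral

variable {g h : ℝ → ℝ} {k q : ℝ}

theorem integral_one_div_mul_add (hk : 0 < k) (hq : 0 < q) :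
    ∫ x in (0 : ℝ)..1, 1 / (k * x + q) = k⁻¹ * log ((k + q) / q) := by
  rw [intervalIntegral.integral_comp_mul_add (fun x => 1 / x) hk.ne',
    integral_one_div_of_pos (by simpa using hq) (by positivity)]
  simp

theorem integral_one_div_add_le_of_le (hg : ContinuousOn g (Icc 0 1))
    (hh : ContinuousOn h (Icc 0 1)) (hq : 0 < q) (hg0 : ∀ x ∈ Icc (0 : ℝ) 1, 0 ≤ g x)
    (hgh : ∀ x ∈ Icc (0 : ℝ) 1, g x ≤ h x) :
    ∫ x in (0 : ℝ)..1, 1 / (h x + q) ≤ ∫ x in (0 : ℝ)..1, 1 / (g x + q) := by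
  have hint : ∀ {u : ℝ → ℝ}, (∀ x ∈ Icc (0 : ℝ) 1, 0 ≤ u x) → ContinuousOn u (Icc 0 1) →
      IntervalIntegrable (fun x => 1 / (u x + q)) volume 0 1 := fun hu0 hu =>
    (continuousOn_const.div (hu.add continuousOn_const) fun x hx =>
      (add_pos_of_nonneg_of_pos (hu0 x hx) hq).ne').intervalIntegrable_of_Icc zero_le_one
  refine intervalIntegral.integral_mono_on zero_le_one
    (hint (fun x hx => (hg0 x hx).trans (hgh x hx)) hh) (hint hg0 hg) fun x hx => ?_
  exact one_div_le_one_div_of_le (by linarith [hg0 x hx]) (by linarith [hgh x hx])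

theorem neg_log_le_log_add_div {K : ℝ} (hK : 1 ≤ K) (hq : 0 < q) :
    -log q ≤ log ((K + q) / q) := by
  rw [← log_inv, inv_eq_one_div]
  exact log_le_log (by positivity) (by gcongr; linarith)

theorem log_add_div_le (hk : 0 ≤ k) (hq : 0 < q) (hq2 : q < 1 / 2) :
    log ((k + q) / q) ≤ (1 + log (k + 1) / log 2) * -log q := by
  have hlog2 : 0 < log 2 := log_pos one_lt_two
  have hlogq : log 2 ≤ -log q := by
    rw [← log_inv]
    exact log_le_log two_pos (by rw [le_inv_comm₀ two_pos hq]; linarith)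
  have hnum : log (k + q) ≤ log (k + 1) := log_le_log (by positivity) (by linarith)
  have hlogk : log (k + 1) ≤ log (k + 1) / log 2 * -log q := by
    rw [div_mul_eq_mul_div, le_div_iff₀ hlog2]
    exact mul_le_mul_of_nonneg_left hlogq (log_nonneg (by linarith))
  rw [log_div (by positivity) hq.ne']
  linarith

theorem isThetaAtZero_integral_one_div_add_of_linear_bounds {K : ℝ}
    (hg : ContinuousOn g (Icc 0 1)) (hk : 0 < k)
    (hbounds : ∀ x ∈ Icc (0 : ℝ) 1, k * x ≤ g x ∧ g x ≤ K * x) :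
    IsThetaAtZero (fun q => ∫ x in (0 : ℝ)..1, 1 / (g x + q)) fun q => -log q := by
  -- with `1 ≤ K'`, `log ((K' + q) / q) ≥ -log q` for every `q > 0`
  set K' := max K 1
  have hkK' : k ≤ K' := by
    have h1 := hbounds 1 (right_mem_Icc.mpr zero_le_one)
    exact le_max_of_le_left (by linarith)
  have hK'0 : 0 < K' := hk.trans_le hkK'
  have hg0 : ∀ x ∈ Icc (0 : ℝ) 1, 0 ≤ g x := fun x hx =>
    (mul_nonneg hk.le hx.1).trans (hbounds x hx).1
  have hlin : ∀ {l : ℝ}, ContinuousOn (fun x => l * x) (Icc 0 1) := by fun_prop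
  have hC : 0 ≤ log (k + 1) / log 2 := by
    have := log_nonneg (by linarith : (1 : ℝ) ≤ k + 1)
    positivity
  refine ⟨K'⁻¹, k⁻¹ * (1 + log (k + 1) / log 2), 1 / 2, inv_pos.mpr hK'0, ?_, one_half_pos,
    fun q hq hq2 => ⟨?_, ?_⟩⟩
  · calc K'⁻¹ ≤ k⁻¹ := inv_anti₀ hk hkK'
      _ ≤ k⁻¹ * (1 + log (k + 1) / log 2) := le_mul_of_one_le_right (by positivity) (by linarith)
  · calc K'⁻¹ * -log q ≤ K'⁻¹ * log ((K' + q) / q) :=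
          mul_le_mul_of_nonneg_left (neg_log_le_log_add_div (le_max_right K 1) hq) (by positivity)
      _ = ∫ x in (0 : ℝ)..1, 1 / (K' * x + q) := (integral_one_div_mul_add hK'0 hq).symm
      _ ≤ ∫ x in (0 : ℝ)..1, 1 / (g x + q) := integral_one_div_add_le_of_le hg hlin hq hg0
          fun x hx => (hbounds x hx).2.trans (mul_le_mul_of_nonneg_right (le_max_left K 1) hx.1)
  · calc ∫ x in (0 : ℝ)..1, 1 / (g x + q) ≤ ∫ x in (0 : ℝ)..1, 1 / (k * x + q) :=
          integral_one_div_add_le_of_le hlin hg hq (fun x hx => mul_nonneg hk.le hx.1)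
            fun x hx => (hbounds x hx).1
      _ = k⁻¹ * log ((k + q) / q) := integral_one_div_mul_add hk hq
      _ ≤ k⁻¹ * ((1 + log (k + 1) / log 2) * -log q) :=
          mul_le_mul_of_nonneg_left (log_add_div_le hk.le hq hq2) (by positivity)
      _ = k⁻¹ * (1 + log (k + 1) / log 2) * -log q := (mul_assoc _ _ _).symm

end Integral

/-- Let `f : [0,1] → ℝ` be given by a convergent power series
`f x = −∑_{n=1}^∞ aₙ xⁿ` on `[0,1]` with `a₁ > 0` and `f x < 0` on `(0,1]`.
Then `∫₀¹ 1/(−f x + q) dx = Θ(−log q)` as `q → 0⁺`. -/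
theorem variance_analytic_m_eq_one (a : ℕ → ℝ) (f : ℝ → ℝ)
    (hsum : ∀ x ∈ Set.Icc (0:ℝ) 1, HasSum (fun n : ℕ => a n * x ^ n) (-f x))
    (h0 : a 0 = 0)
    (h1 : 0 < a 1)
    (hneg : ∀ x ∈ Set.Ioc (0:ℝ) 1, f x < 0) :
    IsThetaAtZero (fun q : ℝ => ∫ x in (0:ℝ)..1, 1 / (-f x + q))
      (fun q : ℝ => -Real.log q) := by
  set F : ℝ → ℝ := fun x => ∑' n, a (n + 1) * x ^ n
  have hF_mul : ∀ x ∈ Icc (0 : ℝ) 1, x * F x = -f x := fun x hx =>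
    mul_tsum_coeff_succ_mul_pow h0 (hsum x hx)
  have hF_cont : ContinuousOn F (Icc 0 1) := continuousOn_Icc_of_hasSum_mul_pow fun x hx =>
    (summable_coeff_succ_mul_pow (hsum x hx).summable).hasSum
  have hF_pos : ∀ x ∈ Icc (0 : ℝ) 1, 0 < F x := by
    intro x hx
    rcases hx.1.eq_or_lt with rfl | hx0
    · have hF0 : F 0 = a 1 := (tsum_eq_single 0 fun n hn => by simp [hn]).trans (by simp)
      rwa [hF0]
    · exact pos_of_mul_pos_right ((hF_mul x hx).symm ▸ neg_pos.mpr (hneg x ⟨hx0, hx.2⟩)) hx0.le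
  obtain ⟨x₀, hx₀, hmin⟩ := isCompact_Icc.exists_isMinOn (nonempty_Icc.mpr zero_le_one) hF_cont
  obtain ⟨x₁, -, hmax⟩ := isCompact_Icc.exists_isMaxOn (nonempty_Icc.mpr zero_le_one) hF_cont
  refine isThetaAtZero_integral_one_div_add_of_linear_bounds (k := F x₀) (K := F x₁)
    ((continuousOn_id.mul hF_cont).congr fun x hx => (hF_mul x hx).symm) (hF_pos x₀ hx₀)
    fun x hx => ?_
  rw [← hF_mul x hx, mul_comm _ x, mul_comm _ x]
  exact ⟨mul_le_mul_of_nonneg_left (hmin hx) hx.1, mul_le_mul_of_nonneg_left (hmax hx) hx.1⟩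
end

section
/- Let m ≥ 2 be an integer and let f : [0,1] → ℝ be given by a convergent power series f(x) = −∑_{n=m}^∞ aₙ xⁿ on [0,1] with aₘ > 0 and f(x) < 0 for all x ∈ (0,1]. Then ∫₀¹ 1/(−f(x) + q) dx = Θ(q^(−1 + 1/m)) as q → 0⁺. -/
open MeasureTheory Filter Topology

set_option maxHeartbeats 2000000 in
/-- Let `m ≥ 2` and let `f : [0,1] → ℝ` be given by a convergent power
series `f x = −∑_{n=m}^∞ aₙ xⁿ` on `[0,1]` with `aₘ > 0` and `f x < 0` on `(0,1]`.
Then `∫₀¹ 1/(−f x + q) dx = Θ(q^(−1 + 1/m))` as `q → 0⁺`. -/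
theorem variance_analytic_m_ge_two (m : ℕ) (hm : 2 ≤ m) (a : ℕ → ℝ) (f : ℝ → ℝ)
    (hsum : ∀ x ∈ Set.Icc (0:ℝ) 1, HasSum (fun n : ℕ => a n * x ^ n) (-f x))
    (hlow : ∀ n < m, a n = 0)
    (ham : 0 < a m)
    (hneg : ∀ x ∈ Set.Ioc (0:ℝ) 1, f x < 0) :
    IsThetaAtZero (fun q : ℝ => ∫ x in (0:ℝ)..1, 1 / (-f x + q))
      (fun q : ℝ => q ^ (-1 + 1/(m:ℝ))) := by
  -- the sum function
  set g : ℝ → ℝ := fun x => ∑' n : ℕ, a n * x ^ n with hgdef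
  have hgf : ∀ x ∈ Set.Icc (0:ℝ) 1, g x = -f x := fun x hx => (hsum x hx).tsum_eq
  -- bound on coefficients
  have hsa : Summable a := by
    have := (hsum 1 ⟨zero_le_one, le_refl 1⟩).summable
    simpa using this
  have habs : Summable (fun n => |a n|) := summable_abs_iff.mpr hsa
  set K : ℝ := ∑' n, |a n| with hKdef
  have hK : ∀ n, |a n| ≤ K := fun n => Summable.le_tsum habs n (fun _ _ => abs_nonneg _)
  have hK0 : 0 < K := lt_of_lt_of_le ham ((le_abs_self _).trans (hK m))
  -- continuity of g on [0,1]
  have hcont : ContinuousOn g (Set.Icc 0 1) := by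
    intro x hx
    rcases eq_or_lt_of_le hx.2 with h1 | h1
    · -- x = 1 : Abel's limit theorem
      subst h1
      have habel : Tendsto g (𝓝[<] (1:ℝ)) (𝓝 (g 1)) := by
        have hps : Tendsto (fun n => ∑ i ∈ Finset.range n, a i) atTop (𝓝 (-f 1)) := by
          have := (hsum 1 ⟨zero_le_one, le_refl 1⟩).tendsto_sum_nat
          simpa using this
        have := Real.tendsto_tsum_powerSeries_nhdsWithin_lt hps
        rwa [hgf 1 ⟨zero_le_one, le_refl 1⟩]
      have : Tendsto g (𝓝[Set.Iic 1] (1:ℝ)) (𝓝 (g 1)) := by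
        rw [show Set.Iic (1:ℝ) = insert 1 (Set.Iio 1) by
              rw [Set.Iio_insert], nhdsWithin_insert]
        exact tendsto_sup.mpr ⟨tendsto_pure_nhds g 1, habel⟩
      exact this.mono_left (nhdsWithin_mono _ (fun y hy => hy.2))
    · -- x < 1 : uniform convergence on [0, r]
      have hx0 : (0:ℝ) ≤ x := hx.1
      set r : ℝ := (x + 1) / 2 with hrdef
      have hxr : x < r := by simp only [hrdef]; linarith
      have hr0 : (0:ℝ) ≤ r := by simp only [hrdef]; linarith
      have hr1 : r < 1 := by simp only [hrdef]; linarith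
      have hcr : ContinuousOn g (Set.Icc 0 r) := by
        apply continuousOn_tsum (u := fun n => K * r ^ n)
        · exact fun i => (continuous_const.mul (continuous_pow i)).continuousOn
        · exact (summable_geometric_of_lt_one hr0 hr1).mul_left K
        · intro n y hy
          have hy0 : (0:ℝ) ≤ y := hy.1
          rw [norm_mul, norm_pow, Real.norm_eq_abs, Real.norm_eq_abs, abs_of_nonneg hy0]
          exact mul_le_mul (hK n) (pow_le_pow_left₀ hy0 hy.2 n) (by positivity) hK0.le
      refine (hcr x ⟨hx0, hxr.le⟩).mono_of_mem_nhdsWithin ?_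
      rw [mem_nhdsWithin]
      exact ⟨Set.Iio r, isOpen_Iio, hxr, fun y hy => ⟨hy.2.1, hy.1.le⟩⟩
  -- local power bounds near zero
  set α : ℝ := a m / 2 with hαdef
  set β : ℝ := a m + K with hβdef
  set δ : ℝ := min (1/2) (a m / (8 * K)) with hδdef
  have hδ0 : 0 < δ := lt_min (by norm_num) (by positivity)
  have hδh : δ ≤ 1/2 := min_le_left _ _
  have hδ1 : δ ≤ 1 := hδh.trans (by norm_num)
  have hα0 : 0 < α := by positivity
  -- tail estimate
  have htail : ∀ x ∈ Set.Icc (0:ℝ) (1/2), |g x - a m * x ^ m| ≤ 2 * K * x ^ (m + 1) := by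
    intro x hx
    have hx0 : (0:ℝ) ≤ x := hx.1
    have hxh : x ≤ 1/2 := hx.2
    have hx1 : x ≤ 1 := hxh.trans (by norm_num)
    have hxlt : x < 1 := lt_of_le_of_lt hxh (by norm_num)
    have hS := hsum x ⟨hx0, hx1⟩
    have hshift : HasSum (fun n => a (n + (m+1)) * x ^ (n + (m+1)))
        ((-f x) - ∑ i ∈ Finset.range (m+1), a i * x ^ i) :=
      (hasSum_nat_add_iff' (m+1)).mpr hS
    have hrange : ∑ i ∈ Finset.range (m+1), a i * x ^ i = a m * x ^ m := by
      rw [Finset.sum_eq_single m]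
      · intro b hb hbm
        rw [hlow b (by simp at hb; omega), zero_mul]
      · intro h; exact absurd (Finset.self_mem_range_succ m) h
    rw [hrange] at hshift
    have hgx : g x - a m * x ^ m = ∑' n, a (n + (m+1)) * x ^ (n + (m+1)) := by
      rw [hgf x ⟨hx0, hx1⟩, hshift.tsum_eq]
    have hb : ∀ n : ℕ, ‖a (n + (m+1)) * x ^ (n + (m+1))‖ ≤ K * x ^ (m+1) * x ^ n := by
      intro n
      rw [norm_mul, Real.norm_eq_abs, Real.norm_eq_abs, abs_of_nonneg (pow_nonneg hx0 _)]
      have hxp : x ^ (n + (m+1)) = x ^ (m+1) * x ^ n := by rw [pow_add]; ring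
      rw [hxp, ← mul_assoc]
      exact mul_le_mul_of_nonneg_right (mul_le_mul_of_nonneg_right (hK _)
        (pow_nonneg hx0 _)) (pow_nonneg hx0 _)
    have hsb : Summable (fun n : ℕ => K * x ^ (m+1) * x ^ n) :=
      (summable_geometric_of_lt_one hx0 hxlt).mul_left _
    have hsn : Summable (fun n : ℕ => ‖a (n + (m+1)) * x ^ (n + (m+1))‖) :=
      Summable.of_nonneg_of_le (fun n => norm_nonneg _) hb hsb
    calc |g x - a m * x ^ m| = ‖∑' n, a (n + (m+1)) * x ^ (n + (m+1))‖ := by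
          rw [hgx, Real.norm_eq_abs]
      _ ≤ ∑' n, ‖a (n + (m+1)) * x ^ (n + (m+1))‖ := norm_tsum_le_tsum_norm hsn
      _ ≤ ∑' n : ℕ, K * x ^ (m+1) * x ^ n := Summable.tsum_le_tsum hb hsn hsb
      _ = K * x ^ (m+1) * (1 - x)⁻¹ := by
          rw [tsum_mul_left, tsum_geometric_of_lt_one hx0 hxlt]
      _ ≤ K * x ^ (m+1) * 2 := by
          apply mul_le_mul_of_nonneg_left _ (by positivity)
          rw [show (2:ℝ) = (1/2)⁻¹ by norm_num]
          exact inv_anti₀ (by norm_num) (by linarith)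
      _ = 2 * K * x ^ (m+1) := by ring
  have hlb : ∀ x ∈ Set.Icc (0:ℝ) δ, α * x ^ m ≤ g x := by
    intro x hx
    have hx0 : (0:ℝ) ≤ x := hx.1
    have hxh : x ≤ 1/2 := hx.2.trans hδh
    have h2 := htail x ⟨hx0, hxh⟩
    have hxδ2 : 2 * K * x ^ (m+1) ≤ (a m / 4) * x ^ m := by
      have : 2 * K * x ≤ a m / 4 := by
        have hxδ : x ≤ a m / (8 * K) := hx.2.trans (min_le_right _ _)
        calc 2 * K * x ≤ 2 * K * (a m / (8 * K)) := by
              apply mul_le_mul_of_nonneg_left hxδ (by positivity)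
          _ = a m / 4 := by field_simp; ring
      calc 2 * K * x ^ (m+1) = (2 * K * x) * x ^ m := by ring
        _ ≤ (a m / 4) * x ^ m := mul_le_mul_of_nonneg_right this (by positivity)
    have := abs_le.mp h2
    nlinarith [pow_nonneg hx0 m]
  have hub : ∀ x ∈ Set.Icc (0:ℝ) δ, g x ≤ β * x ^ m := by
    intro x hx
    have hx0 : (0:ℝ) ≤ x := hx.1
    have hxh : x ≤ 1/2 := hx.2.trans hδh
    have h2 := htail x ⟨hx0, hxh⟩
    have hxK : 2 * K * x ^ (m+1) ≤ K * x ^ m := by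
      calc 2 * K * x ^ (m+1) = (2 * x) * (K * x ^ m) := by ring
        _ ≤ 1 * (K * x ^ m) := by
            apply mul_le_mul_of_nonneg_right (by linarith) (by positivity)
        _ = K * x ^ m := one_mul _
    have := abs_le.mp h2
    simp only [hβdef]
    nlinarith
  -- positivity of g
  have hgpos : ∀ x ∈ Set.Ioc (0:ℝ) 1, 0 < g x := by
    intro x hx
    rw [hgf x ⟨hx.1.le, hx.2⟩]
    linarith [hneg x hx]
  have hg0 : ∀ x ∈ Set.Icc (0:ℝ) 1, 0 ≤ g x := by
    intro x hx
    rcases eq_or_lt_of_le hx.1 with h | h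
    · have := hlb 0 ⟨le_refl 0, hδ0.le⟩
      simp only [← h] at *
      calc (0:ℝ) = α * 0 ^ m := by
            rw [zero_pow (by omega : m ≠ 0), mul_zero]
        _ ≤ g 0 := hlb 0 ⟨le_refl 0, hδ0.le⟩
    · exact (hgpos x ⟨h, hx.2⟩).le
  -- minimum on [δ, 1]
  obtain ⟨z, hz, hzmin⟩ := isCompact_Icc.exists_isMinOn (Set.nonempty_Icc.mpr hδ1)
    (hcont.mono (Set.Icc_subset_Icc_left hδ0.le))
  set cδ : ℝ := g z with hcδdef
  have hcδ0 : 0 < cδ := hgpos z ⟨hδ0.trans_le hz.1, hz.2⟩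
  -- constants
  set c : ℝ := (β + 1)⁻¹ with hcdef
  set C : ℝ := c + (1 + (α * (m - 1))⁻¹ + (1 - δ) / cδ) with hCdef
  have hβ0 : 0 < β := by simp only [hβdef]; positivity
  have hc0 : 0 < c := by simp only [hcdef]; positivity
  have hm1 : (1:ℝ) ≤ (m:ℝ) - 1 := by
    have : (2:ℝ) ≤ (m:ℝ) := by exact_mod_cast hm
    linarith
  have hCc : c ≤ C := by
    have h1 : (0:ℝ) ≤ (α * ((m:ℝ) - 1))⁻¹ := by positivity
    have h2 : (0:ℝ) ≤ (1 - δ) / cδ := by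
      apply div_nonneg _ hcδ0.le; linarith
    simp only [hCdef]; linarith
  refine ⟨c, C, δ ^ m, hc0, hCc, pow_pos hδ0 m, ?_⟩
  intro q hq hqδ
  have hm0 : (0:ℝ) < (m:ℝ) := by positivity
  have hmne : (m:ℝ) ≠ 0 := hm0.ne'
  have hm2 : (2:ℝ) ≤ (m:ℝ) := by exact_mod_cast hm
  set s : ℝ := q ^ ((m:ℝ)⁻¹) with hsdef
  have hs0 : 0 < s := Real.rpow_pos_of_pos hq _
  have hsδ : s < δ := by
    have h1 : q ^ ((m:ℝ)⁻¹) < (δ ^ m) ^ ((m:ℝ)⁻¹) :=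
      Real.rpow_lt_rpow hq.le hqδ (by positivity)
    rwa [Real.pow_rpow_inv_natCast hδ0.le (by omega)] at h1
  have hsm : s ^ m = q := Real.rpow_inv_natCast_pow hq.le (by omega)
  have hs1 : s ≤ 1 := (hsδ.le).trans hδ1
  have hq1 : q < 1 := lt_of_lt_of_le hqδ (pow_le_one₀ hδ0.le hδ1)
  set R : ℝ := q ^ (-1 + 1/(m:ℝ)) with hRdef
  have hexp : -1 + 1/(m:ℝ) ≤ 0 := by
    have h1 : 1/(m:ℝ) ≤ 1 := by
      rw [div_le_one hm0]; linarith
    linarith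
  have hR0 : 0 < R := Real.rpow_pos_of_pos hq _
  have hR1 : 1 ≤ R :=
    Real.one_le_rpow_of_pos_of_le_one_of_nonpos hq hq1.le hexp
  have hsq : s / q = R := by
    rw [hRdef, hsdef, show (-1 + 1/(m:ℝ)) = (m:ℝ)⁻¹ - 1 by rw [one_div]; ring,
      Real.rpow_sub hq, Real.rpow_one]
  -- replace f by g
  have hIeq : (∫ x in (0:ℝ)..1, 1 / (-f x + q)) = ∫ x in (0:ℝ)..1, 1 / (g x + q) := by
    apply intervalIntegral.integral_congr
    intro x hx
    rw [Set.uIcc_of_le zero_le_one] at hx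
    show 1 / (-f x + q) = 1 / (g x + q)
    rw [hgf x hx]
  have hden : ∀ x ∈ Set.Icc (0:ℝ) 1, 0 < g x + q := fun x hx => by linarith [hg0 x hx]
  have hcq : ContinuousOn (fun x => 1 / (g x + q)) (Set.Icc (0:ℝ) 1) :=
    ContinuousOn.div continuousOn_const (hcont.add continuousOn_const)
      (fun x hx => (hden x hx).ne')
  have hInt : ∀ u v : ℝ, 0 ≤ u → v ≤ 1 → u ≤ v →
      IntervalIntegrable (fun x => 1 / (g x + q)) volume u v := by
    intro u v hu hv huv
    apply (hcq.mono ?_).intervalIntegrable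
    rw [Set.uIcc_of_le huv]
    exact Set.Icc_subset_Icc hu hv
  have hnn : ∀ u v : ℝ, 0 ≤ u → v ≤ 1 → u ≤ v →
      0 ≤ ∫ x in u..v, 1 / (g x + q) := by
    intro u v hu hv huv
    apply intervalIntegral.integral_nonneg huv
    intro x hx
    have := hden x ⟨hu.trans hx.1, hx.2.trans hv⟩
    positivity
  constructor
  · -- lower bound
    show c * R ≤ ∫ x in (0:ℝ)..1, 1 / (-f x + q)
    rw [hIeq]
    have hsplit : (∫ x in (0:ℝ)..s, 1 / (g x + q)) + (∫ x in s..1, 1 / (g x + q))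
        = ∫ x in (0:ℝ)..1, 1 / (g x + q) :=
      intervalIntegral.integral_add_adjacent_intervals
        (hInt 0 s le_rfl hs1 hs0.le) (hInt s 1 hs0.le le_rfl hs1)
    have hmono : ∀ x ∈ Set.Icc (0:ℝ) s, ((β + 1) * q)⁻¹ ≤ 1 / (g x + q) := by
      intro x hx
      have hxδ : x ∈ Set.Icc (0:ℝ) δ := ⟨hx.1, hx.2.trans hsδ.le⟩
      have h1 : g x ≤ β * x ^ m := hub x hxδ
      have h2 : x ^ m ≤ q := by
        rw [← hsm]
        exact pow_le_pow_left₀ hx.1 hx.2 m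
      have h3 : g x + q ≤ (β + 1) * q := by nlinarith
      rw [one_div]
      apply inv_anti₀ (hden x ⟨hxδ.1, hxδ.2.trans hδ1⟩) h3
    have hlowI : s * ((β + 1) * q)⁻¹ ≤ ∫ x in (0:ℝ)..s, 1 / (g x + q) := by
      have := intervalIntegral.integral_mono_on hs0.le
        (intervalIntegrable_const) (hInt 0 s le_rfl hs1 hs0.le) hmono
      rwa [intervalIntegral.integral_const, sub_zero, smul_eq_mul] at this
    have hcR : c * R = s * ((β + 1) * q)⁻¹ := by
      have hq' : q ≠ 0 := hq.ne'
      have hβ1 : β + 1 ≠ 0 := ne_of_gt (by positivity)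
      rw [← hsq, hcdef]
      field_simp
    linarith [hnn s 1 hs0.le le_rfl hs1, hlowI]
  · -- upper bound
    show (∫ x in (0:ℝ)..1, 1 / (-f x + q)) ≤ C * R
    rw [hIeq]
    have hsplit1 : (∫ x in (0:ℝ)..s, 1 / (g x + q)) + (∫ x in s..δ, 1 / (g x + q))
        = ∫ x in (0:ℝ)..δ, 1 / (g x + q) :=
      intervalIntegral.integral_add_adjacent_intervals
        (hInt 0 s le_rfl hs1 hs0.le) (hInt s δ hs0.le hδ1 hsδ.le)
    have hsplit2 : (∫ x in (0:ℝ)..δ, 1 / (g x + q)) + (∫ x in δ..1, 1 / (g x + q))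
        = ∫ x in (0:ℝ)..1, 1 / (g x + q) :=
      intervalIntegral.integral_add_adjacent_intervals
        (hInt 0 δ le_rfl hδ1 hδ0.le) (hInt δ 1 hδ0.le le_rfl hδ1)
    -- piece A
    have hA : (∫ x in (0:ℝ)..s, 1 / (g x + q)) ≤ R := by
      have hmono : ∀ x ∈ Set.Icc (0:ℝ) s, 1 / (g x + q) ≤ q⁻¹ := by
        intro x hx
        have hx1 : x ∈ Set.Icc (0:ℝ) 1 := ⟨hx.1, hx.2.trans hs1⟩
        rw [one_div]
        apply inv_anti₀ hq
        linarith [hg0 x hx1]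
      have := intervalIntegral.integral_mono_on hs0.le
        (hInt 0 s le_rfl hs1 hs0.le) (intervalIntegrable_const) hmono
      rw [intervalIntegral.integral_const, sub_zero, smul_eq_mul] at this
      calc (∫ x in (0:ℝ)..s, 1 / (g x + q)) ≤ s * q⁻¹ := this
        _ = R := by rw [← hsq]; ring
    -- piece B
    have hBc : ContinuousOn (fun x : ℝ => α⁻¹ * x ^ (-(m:ℝ))) (Set.Icc s δ) := by
      apply ContinuousOn.mul continuousOn_const
      intro x hx
      exact (Real.continuousAt_rpow_const x _ (Or.inl (hs0.trans_le hx.1).ne')).continuousWithinAt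
    have hBint : IntervalIntegrable (fun x : ℝ => α⁻¹ * x ^ (-(m:ℝ))) volume s δ := by
      apply ContinuousOn.intervalIntegrable
      rwa [Set.uIcc_of_le hsδ.le]
    have hBmono : ∀ x ∈ Set.Icc s δ, 1 / (g x + q) ≤ α⁻¹ * x ^ (-(m:ℝ)) := by
      intro x hx
      have hx0 : 0 < x := hs0.trans_le hx.1
      have hxδ : x ∈ Set.Icc (0:ℝ) δ := ⟨hx0.le, hx.2⟩
      have h1 : α * x ^ m ≤ g x + q := by linarith [hlb x hxδ]
      have h2 : 0 < α * x ^ m := by positivity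
      rw [Real.rpow_neg hx0.le, Real.rpow_natCast, one_div]
      calc (g x + q)⁻¹ ≤ (α * x ^ m)⁻¹ := inv_anti₀ h2 h1
        _ = α⁻¹ * (x ^ m)⁻¹ := by rw [mul_inv]
    have hBval : (∫ x in s..δ, α⁻¹ * x ^ (-(m:ℝ)))
        = α⁻¹ * ((δ ^ (-(m:ℝ) + 1) - s ^ (-(m:ℝ) + 1)) / (-(m:ℝ) + 1)) := by
      have hcondR : (-(m:ℝ)) ≠ -1 ∧ (0:ℝ) ∉ Set.uIcc s δ := by
        constructor
        · intro h; linarith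
        · rw [Set.uIcc_of_le hsδ.le]
          intro h
          exact absurd h.1 (not_le.mpr hs0)
      rw [intervalIntegral.integral_const_mul, integral_rpow (Or.inr hcondR)]
    have hsR : s ^ (-(m:ℝ) + 1) = R := by
      rw [hsdef, ← Real.rpow_mul hq.le, hRdef]
      congr 1
      field_simp
    have hB : (∫ x in s..δ, 1 / (g x + q)) ≤ (α * ((m:ℝ) - 1))⁻¹ * R := by
      have h1 := intervalIntegral.integral_mono_on hsδ.le
        (hInt s δ hs0.le hδ1 hsδ.le) hBint hBmono
      have hδpow : 0 ≤ δ ^ (-(m:ℝ) + 1) := (Real.rpow_pos_of_pos hδ0 _).le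
      have hm1pos : 0 < (m:ℝ) - 1 := by linarith
      rw [hBval] at h1
      calc (∫ x in s..δ, 1 / (g x + q))
          ≤ α⁻¹ * ((δ ^ (-(m:ℝ) + 1) - s ^ (-(m:ℝ) + 1)) / (-(m:ℝ) + 1)) := h1
        _ = α⁻¹ * ((s ^ (-(m:ℝ) + 1) - δ ^ (-(m:ℝ) + 1)) / ((m:ℝ) - 1)) := by
            congr 1
            rw [div_eq_div_iff (ne_of_lt (by linarith : -(m:ℝ) + 1 < 0))
              (ne_of_gt (by linarith : (0:ℝ) < (m:ℝ) - 1))]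
            ring
        _ ≤ α⁻¹ * (s ^ (-(m:ℝ) + 1) / ((m:ℝ) - 1)) := by
            gcongr
            linarith
        _ = (α * ((m:ℝ) - 1))⁻¹ * R := by
            rw [hsR, mul_inv]; ring
    -- piece C
    have hC : (∫ x in δ..1, 1 / (g x + q)) ≤ (1 - δ) / cδ * R := by
      have hmono : ∀ x ∈ Set.Icc δ 1, 1 / (g x + q) ≤ cδ⁻¹ := by
        intro x hx
        have h1 : cδ ≤ g x := hzmin hx
        rw [one_div]
        apply inv_anti₀ hcδ0
        linarith
      have := intervalIntegral.integral_mono_on hδ1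
        (hInt δ 1 hδ0.le le_rfl hδ1) (intervalIntegrable_const) hmono
      rw [intervalIntegral.integral_const, smul_eq_mul] at this
      calc (∫ x in δ..1, 1 / (g x + q)) ≤ (1 - δ) * cδ⁻¹ := this
        _ = (1 - δ) / cδ * 1 := by rw [mul_one, div_eq_mul_inv]
        _ ≤ (1 - δ) / cδ * R := by
            apply mul_le_mul_of_nonneg_left hR1
            apply div_nonneg _ hcδ0.le
            linarith
    have hCR : R + (α * ((m:ℝ) - 1))⁻¹ * R + (1 - δ) / cδ * R ≤ C * R := by
      have hexpand : C * R = c * R + (R + (α * ((m:ℝ) - 1))⁻¹ * R + (1 - δ) / cδ * R) := by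
        rw [hCdef]; ring
      rw [hexpand]
      linarith [mul_nonneg hc0.le hR0.le]
    linarith
end

section
/- Let α > 0 and 0 ≤ γ < 1/2 be real numbers with 2γ + α > 1, and let ε > 0. Then q^(1 − (1−2γ)/α) · ∫₀^ε x^(−2γ)/(xᵅ + q) dx tends, as q → 0⁺, to the finite positive limit ∫₀^∞ y^(−2γ)/(yᵅ + 1) dy; in particular ∫₀^ε x^(−2γ)/(xᵅ + q) dx = Θ(q^(−1 + (1−2γ)/α)) as q → 0⁺. -/
open MeasureTheory Filter Topology Set

lemma gcont (α γ : ℝ) :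
    ContinuousOn (fun y : ℝ => y ^ (-(2*γ)) / (y ^ α + 1)) (Set.Ioi 0) := by
  apply ContinuousOn.div
  · exact continuousOn_id.rpow_const fun y hy => Or.inl (ne_of_gt hy)
  · exact (continuousOn_id.rpow_const fun y hy => Or.inl (ne_of_gt hy)).add continuousOn_const
  · intro y hy
    have : (0:ℝ) < y ^ α := Real.rpow_pos_of_pos hy _
    positivity

lemma gint (α γ : ℝ) (hα : 0 < α) (hγ0 : 0 ≤ γ) (hγ : γ < 1/2) (hsum : 1 < 2*γ + α) :
    IntegrableOn (fun y : ℝ => y ^ (-(2*γ)) / (y ^ α + 1)) (Set.Ioi 0) := by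
  have hmeas : AEStronglyMeasurable (fun y : ℝ => y ^ (-(2*γ)) / (y ^ α + 1))
      (volume.restrict (Set.Ioi (0:ℝ))) :=
    (gcont α γ).aestronglyMeasurable measurableSet_Ioi
  rw [show Set.Ioi (0:ℝ) = Set.Ioc 0 1 ∪ Set.Ioi 1 from (Set.Ioc_union_Ioi_eq_Ioi zero_le_one).symm]
  apply IntegrableOn.union
  · -- on Ioc 0 1, dominate by y ^ (-(2γ))
    have hint : IntegrableOn (fun y : ℝ => y ^ (-(2*γ))) (Set.Ioc (0:ℝ) 1) := by
      have := intervalIntegral.intervalIntegrable_rpow' (a := 0) (b := 1) (r := -(2*γ)) (by linarith)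
      rwa [intervalIntegrable_iff, Set.uIoc_of_le zero_le_one] at this
    apply hint.mono' (hmeas.mono_measure (Measure.restrict_mono Set.Ioc_subset_Ioi_self le_rfl))
    filter_upwards [ae_restrict_mem measurableSet_Ioc] with y hy
    have hy0 : 0 < y := hy.1
    have h1 : (0:ℝ) < y ^ α := Real.rpow_pos_of_pos hy0 _
    have h2 : (0:ℝ) ≤ y ^ (-(2*γ)) := (Real.rpow_pos_of_pos hy0 _).le
    rw [Real.norm_eq_abs, abs_of_nonneg (by positivity)]
    calc y ^ (-(2*γ)) / (y ^ α + 1) ≤ y ^ (-(2*γ)) / 1 := by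
          apply div_le_div_of_nonneg_left h2 one_pos <;> linarith
      _ = y ^ (-(2*γ)) := div_one _
  · -- on Ioi 1, dominate by y ^ (-(2γ) - α)
    have hint : IntegrableOn (fun y : ℝ => y ^ (-(2*γ) - α)) (Set.Ioi (1:ℝ)) :=
      integrableOn_Ioi_rpow_of_lt (by linarith) one_pos
    apply hint.mono' (hmeas.mono_measure (Measure.restrict_mono (Set.Ioi_subset_Ioi zero_le_one) le_rfl))
    filter_upwards [ae_restrict_mem measurableSet_Ioi] with y hy
    have hy0 : (0:ℝ) < y := lt_trans one_pos hy
    have h1 : (0:ℝ) < y ^ α := Real.rpow_pos_of_pos hy0 _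
    have h2 : (0:ℝ) ≤ y ^ (-(2*γ)) := (Real.rpow_pos_of_pos hy0 _).le
    rw [Real.norm_eq_abs, abs_of_nonneg (by positivity)]
    calc y ^ (-(2*γ)) / (y ^ α + 1) ≤ y ^ (-(2*γ)) / y ^ α := by
          apply div_le_div_of_nonneg_left h2 h1; linarith
      _ = y ^ (-(2*γ) - α) := (Real.rpow_sub hy0 _ _).symm


/-- Let `α > 0`, `0 ≤ γ < 1/2` with `2γ + α > 1`, and `ε > 0`. Then
`q^(1 − (1−2γ)/α) · ∫₀^ε x^(−2γ)/(x^α + q) dx` tends, as `q → 0⁺`, to the finite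
positive limit `∫₀^∞ y^(−2γ)/(y^α + 1) dy`; in particular
`∫₀^ε x^(−2γ)/(x^α + q) dx = Θ(q^(−1 + (1−2γ)/α))` as `q → 0⁺`. -/
theorem variance_unbounded_test_function_divergent (α γ ε : ℝ)
    (hα : 0 < α) (hγ0 : 0 ≤ γ) (hγ : γ < 1/2) (hsum : 1 < 2*γ + α) (hε : 0 < ε) :
    (0 < ∫ y in Set.Ioi (0:ℝ), y ^ (-(2*γ)) / (y ^ α + 1)) ∧
    Tendsto
      (fun q : ℝ => q ^ (1 - (1 - 2*γ)/α) * ∫ x in (0:ℝ)..ε, x ^ (-(2*γ)) / (x ^ α + q))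
      (𝓝[>] (0:ℝ)) (𝓝 (∫ y in Set.Ioi (0:ℝ), y ^ (-(2*γ)) / (y ^ α + 1))) ∧
    IsThetaAtZero (fun q : ℝ => ∫ x in (0:ℝ)..ε, x ^ (-(2*γ)) / (x ^ α + q))
      (fun q : ℝ => q ^ (-1 + (1 - 2*γ)/α)) := by
  set g : ℝ → ℝ := fun y => y ^ (-(2*γ)) / (y ^ α + 1) with hg
  set L : ℝ := ∫ y in Set.Ioi (0:ℝ), g y with hL
  have hgint := gint α γ hα hγ0 hγ hsum
  -- positivity
  have hpos : 0 < L := by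
    have h1 : 0 < volume (Function.support g ∩ Set.Ioi 0) := by
      have hss : Function.support g ∩ Set.Ioi 0 = Set.Ioi 0 := by
        apply Set.inter_eq_right.mpr
        intro y hy
        have h1 : (0:ℝ) < y ^ α := Real.rpow_pos_of_pos hy _
        have h2 : (0:ℝ) < y ^ (-(2*γ)) := Real.rpow_pos_of_pos hy _
        exact Function.mem_support.mpr (ne_of_gt (by positivity))
      rw [hss, Real.volume_Ioi]
      exact ENNReal.zero_lt_top
    have h2 : 0 ≤ᵐ[volume.restrict (Set.Ioi (0:ℝ))] g := by
      filter_upwards [ae_restrict_mem measurableSet_Ioi] with y hy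
      have h1 : (0:ℝ) < y ^ α := Real.rpow_pos_of_pos hy _
      have h2 : (0:ℝ) < y ^ (-(2*γ)) := Real.rpow_pos_of_pos hy _
      positivity
    exact (setIntegral_pos_iff_support_of_nonneg_ae h2 hgint).mpr h1
  -- key identity
  have key : ∀ q : ℝ, 0 < q →
      q ^ (1 - (1 - 2*γ)/α) * ∫ x in (0:ℝ)..ε, x ^ (-(2*γ)) / (x ^ α + q)
        = ∫ y in (0:ℝ)..(ε / q ^ α⁻¹), g y := by
    intro q hq
    set t : ℝ := q ^ α⁻¹ with ht
    have ht0 : 0 < t := Real.rpow_pos_of_pos hq _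
    have htα : t ^ α = q := by
      rw [ht, ← Real.rpow_mul hq.le, inv_mul_cancel₀ (ne_of_gt hα), Real.rpow_one]
    have step1 : (∫ y in (0:ℝ)..(ε / t), (t*y) ^ (-(2*γ)) / ((t*y) ^ α + q))
        = t⁻¹ • ∫ x in (0:ℝ)..ε, x ^ (-(2*γ)) / (x ^ α + q) := by
      rw [intervalIntegral.integral_comp_mul_left
        (fun x => x ^ (-(2*γ)) / (x ^ α + q)) (ne_of_gt ht0)]
      rw [mul_zero, mul_div_cancel₀ _ (ne_of_gt ht0)]
    have step2 : (∫ y in (0:ℝ)..(ε / t), (t*y) ^ (-(2*γ)) / ((t*y) ^ α + q))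
        = (t ^ (-(2*γ)) / q) * ∫ y in (0:ℝ)..(ε / t), g y := by
      rw [← intervalIntegral.integral_const_mul]
      apply intervalIntegral.integral_congr
      intro y hy
      have hy0 : 0 ≤ y := by
        rcases hy with ⟨h1, h2⟩
        simpa [min_eq_left (by positivity : (0:ℝ) ≤ ε / t)] using h1
      show (t*y) ^ (-(2*γ)) / ((t*y) ^ α + q)
        = t ^ (-(2*γ)) / q * (y ^ (-(2*γ)) / (y ^ α + 1))
      rw [Real.mul_rpow ht0.le hy0, Real.mul_rpow ht0.le hy0, htα, div_mul_div_comm]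
      congr 1
      ring
    have hI : (∫ x in (0:ℝ)..ε, x ^ (-(2*γ)) / (x ^ α + q))
        = t * (t ^ (-(2*γ)) / q * ∫ y in (0:ℝ)..(ε/t), g y) := by
      rw [← step2, step1, smul_eq_mul, ← mul_assoc, mul_inv_cancel₀ (ne_of_gt ht0), one_mul]
    rw [hI]
    have hC : q ^ (1 - (1 - 2*γ)/α) * (t * (t ^ (-(2*γ)) / q)) = 1 := by
      have e2 : t ^ (-(2*γ)) = q ^ (α⁻¹ * (-(2*γ))) := by
        rw [ht, ← Real.rpow_mul hq.le]
      rw [ht, e2, div_eq_mul_inv (q ^ (α⁻¹ * -(2 * γ))) q, ← Real.rpow_neg_one q,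
        ← Real.rpow_add hq, ← Real.rpow_add hq, ← Real.rpow_add hq]
      rw [show (1 - (1-2*γ)/α) + (α⁻¹ + (α⁻¹*(-(2*γ)) + (-1))) = 0 by
        field_simp; ring]
      exact Real.rpow_zero q
    calc q ^ (1 - (1 - 2*γ)/α) * (t * (t ^ (-(2*γ)) / q * ∫ y in (0:ℝ)..(ε/t), g y))
        = (q ^ (1 - (1 - 2*γ)/α) * (t * (t ^ (-(2*γ)) / q))) * ∫ y in (0:ℝ)..(ε/t), g y := by
          ring
      _ = ∫ y in (0:ℝ)..(ε/t), g y := by rw [hC, one_mul]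
  
  have hs : Tendsto (fun q : ℝ => ε / q ^ α⁻¹) (𝓝[>] (0:ℝ)) atTop := by
    have h1 : Tendsto (fun q : ℝ => (q⁻¹) ^ α⁻¹) (𝓝[>] (0:ℝ)) atTop :=
      (tendsto_rpow_atTop (inv_pos.mpr hα)).comp tendsto_inv_nhdsGT_zero
    apply (h1.const_mul_atTop hε).congr'
    filter_upwards [self_mem_nhdsWithin] with q hq
    rw [Real.inv_rpow (le_of_lt hq), ← div_eq_mul_inv]
  have htend0 : Tendsto (fun q : ℝ => ∫ y in (0:ℝ)..(ε / q ^ α⁻¹), g y)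
      (𝓝[>] (0:ℝ)) (𝓝 L) :=
    intervalIntegral_tendsto_integral_Ioi 0 hgint hs
  have htend : Tendsto
      (fun q : ℝ => q ^ (1 - (1 - 2*γ)/α) * ∫ x in (0:ℝ)..ε, x ^ (-(2*γ)) / (x ^ α + q))
      (𝓝[>] (0:ℝ)) (𝓝 L) := by
    apply htend0.congr'
    filter_upwards [self_mem_nhdsWithin] with q hq
    exact (key q hq).symm
  refine ⟨hpos, htend, ?_⟩
  have hev : ∀ᶠ q in 𝓝[>] (0:ℝ),
      (q ^ (1 - (1 - 2*γ)/α) * ∫ x in (0:ℝ)..ε, x ^ (-(2*γ)) / (x ^ α + q))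
        ∈ Set.Ioo (L/2) (2*L) :=
    htend.eventually (Ioo_mem_nhds (by linarith) (by linarith))
  rw [Filter.eventually_iff] at hev
  obtain ⟨u, hu, hsub⟩ := mem_nhdsGT_iff_exists_Ioo_subset.mp hev
  refine ⟨L/2, 2*L, u, by linarith, by linarith, hu, ?_⟩
  intro q hq hqu
  obtain ⟨hlow, hhigh⟩ := hsub ⟨hq, hqu⟩
  have hqpow : 0 < q ^ (-1 + (1-2*γ)/α) := Real.rpow_pos_of_pos hq _
  have hcancel : q ^ (-1 + (1-2*γ)/α) * q ^ (1 - (1-2*γ)/α) = 1 := by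
    rw [← Real.rpow_add hq]
    norm_num
  have hIq : (∫ x in (0:ℝ)..ε, x ^ (-(2*γ)) / (x ^ α + q))
      = q ^ (-1 + (1-2*γ)/α) *
        (q ^ (1 - (1-2*γ)/α) * ∫ x in (0:ℝ)..ε, x ^ (-(2*γ)) / (x ^ α + q)) := by
    rw [← mul_assoc, hcancel, one_mul]
  constructor
  · calc L/2 * q ^ (-1 + (1-2*γ)/α) = q ^ (-1 + (1-2*γ)/α) * (L/2) := by ring
      _ ≤ q ^ (-1 + (1-2*γ)/α) *
          (q ^ (1 - (1-2*γ)/α) * ∫ x in (0:ℝ)..ε, x ^ (-(2*γ)) / (x ^ α + q)) :=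
        mul_le_mul_of_nonneg_left hlow.le hqpow.le
      _ = ∫ x in (0:ℝ)..ε, x ^ (-(2*γ)) / (x ^ α + q) := hIq.symm
  · calc (∫ x in (0:ℝ)..ε, x ^ (-(2*γ)) / (x ^ α + q))
        = q ^ (-1 + (1-2*γ)/α) *
          (q ^ (1 - (1-2*γ)/α) * ∫ x in (0:ℝ)..ε, x ^ (-(2*γ)) / (x ^ α + q)) := hIq
      _ ≤ q ^ (-1 + (1-2*γ)/α) * (2*L) := mul_le_mul_of_nonneg_left hhigh.le hqpow.le
      _ = 2*L * q ^ (-1 + (1-2*γ)/α) := by ring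
end

section
/- Let i₁, i₂ be positive integers with i₂ > i₁ ≥ 1. Then the double integral ∫₀¹ ∫₀¹ 1/(x₁^{i₁}·x₂^{i₂} + q) dx₂ dx₁ satisfies ∫₀¹ ∫₀¹ 1/(x₁^{i₁}·x₂^{i₂} + q) dx₂ dx₁ = Θ(q^(−1 + 1/i₂)) as q → 0⁺. -/
open MeasureTheory Filter Topology

/-! The substitution `x = s t` with `a sⁿ = q` turns `∫₀¹ dx / (a xⁿ + q)` into
`(s / q) ∫₀^{1/s} dt / (tⁿ + 1)`. For `n ≥ 2` the last integral lies between `1/2` (when `s ≤ 1`)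
and `π` (compare with `2 / (1 + t²)`), so the inner integral is comparable to
`a^(-1/n) q^(-1 + 1/n)`. Taking `a = x₁^i₁`, the lower bound follows from monotonicity in `a`,
and the upper bound leaves `∫₀¹ x₁^(-i₁/i₂) dx₁`, which is finite exactly because `i₁ < i₂`. -/

open Real Set

section InnerIntegral

variable {n : ℕ} {a q : ℝ}

lemma intervalIntegrable_one_div_mul_pow_add (ha : 0 ≤ a) (hq : 0 < q) {u v : ℝ}
    (hu : 0 ≤ u) (hv : 0 ≤ v) :
    IntervalIntegrable (fun x : ℝ => 1 / (a * x ^ n + q)) volume u v := by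
  refine ContinuousOn.intervalIntegrable (continuousOn_const.div (by fun_prop) ?_)
  intro x hx
  have hx0 : 0 ≤ x := (le_min hu hv).trans hx.1
  positivity

lemma intervalIntegrable_one_div_pow_add_one {u v : ℝ} (hu : 0 ≤ u) (hv : 0 ≤ v) :
    IntervalIntegrable (fun t : ℝ => 1 / (t ^ n + 1)) volume u v := by
  simpa using intervalIntegrable_one_div_mul_pow_add (n := n) zero_le_one one_pos hu hv

lemma sq_add_one_le_two_mul_pow_add_one (hn : 2 ≤ n) {t : ℝ} (ht : 0 ≤ t) :
    t ^ 2 + 1 ≤ 2 * (t ^ n + 1) := by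
  rcases le_total t 1 with ht1 | ht1
  · nlinarith [pow_le_one₀ ht ht1 (n := 2), pow_nonneg ht n]
  · nlinarith [pow_le_pow_right₀ ht1 hn]

lemma integral_one_div_pow_add_one_le_pi (hn : 2 ≤ n) {R : ℝ} (hR : 0 ≤ R) :
    ∫ t in (0:ℝ)..R, 1 / (t ^ n + 1) ≤ π := by
  have hbound : ∀ t ∈ Icc (0:ℝ) R, 1 / (t ^ n + 1) ≤ 2 * (1 / (1 + t ^ 2)) := by
    intro t ht
    have ht0 : 0 ≤ t := ht.1
    rw [mul_one_div, div_le_div_iff₀ (by positivity) (by positivity)]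
    linarith [sq_add_one_le_two_mul_pow_add_one hn ht0]
  calc ∫ t in (0:ℝ)..R, 1 / (t ^ n + 1)
      ≤ ∫ t in (0:ℝ)..R, 2 * (1 / (1 + t ^ 2)) := by
        refine intervalIntegral.integral_mono_on hR
          (intervalIntegrable_one_div_pow_add_one le_rfl hR) ?_ hbound
        exact (continuous_const.mul (continuous_const.div (by fun_prop)
          fun t => by positivity)).intervalIntegrable _ _
    _ = 2 * arctan R := by
        rw [intervalIntegral.integral_const_mul, integral_one_div_one_add_sq, arctan_zero, sub_zero]
    _ ≤ π := by linarith [arctan_lt_pi_div_two R]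

lemma half_le_integral_one_div_pow_add_one {R : ℝ} (hR : 1 ≤ R) :
    1 / 2 ≤ ∫ t in (0:ℝ)..R, 1 / (t ^ n + 1) := by
  have hR0 : 0 ≤ R := zero_le_one.trans hR
  calc (1 : ℝ) / 2 = ∫ _ in (0:ℝ)..1, (1 : ℝ) / 2 := by simp
    _ ≤ ∫ t in (0:ℝ)..1, 1 / (t ^ n + 1) := by
        refine intervalIntegral.integral_mono_on zero_le_one intervalIntegrable_const
          (intervalIntegrable_one_div_pow_add_one le_rfl zero_le_one) fun t ht => ?_
        have ht0 : 0 ≤ t := ht.1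
        rw [div_le_div_iff₀ two_pos (by positivity)]
        linarith [pow_le_one₀ ht.1 ht.2 (n := n)]
    _ ≤ ∫ t in (0:ℝ)..R, 1 / (t ^ n + 1) :=
        intervalIntegral.integral_mono_interval le_rfl zero_le_one hR
          ((ae_restrict_mem measurableSet_Ioc).mono fun t ht => by
            have ht0 : 0 ≤ t := ht.1.le
            dsimp only [Pi.zero_apply]
            positivity)
          (intervalIntegrable_one_div_pow_add_one le_rfl hR0)

lemma integral_one_div_mul_pow_add_eq (hn : n ≠ 0) (ha : 0 < a) (hq : 0 < q) :
    ∫ x in (0:ℝ)..1, 1 / (a * x ^ n + q) =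
      (q / a) ^ (n : ℝ)⁻¹ / q * ∫ t in (0:ℝ)..((q / a) ^ (n : ℝ)⁻¹)⁻¹, 1 / (t ^ n + 1) := by
  set s := (q / a) ^ (n : ℝ)⁻¹
  have hs0 : 0 < s := by positivity
  have hsn : s ^ n = q / a := rpow_inv_natCast_pow (div_pos hq ha).le hn
  have hpt : ∀ x : ℝ, 1 / (a * x ^ n + q) = q⁻¹ * (1 / ((x / s) ^ n + 1)) := by
    intro x
    rw [div_pow, hsn]
    field_simp
  simp_rw [hpt, intervalIntegral.integral_const_mul,
    intervalIntegral.integral_comp_div (fun t => 1 / (t ^ n + 1)) hs0.ne', zero_div, one_div s,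
    smul_eq_mul]
  ring

lemma integral_one_div_mul_pow_add_le (hn : 2 ≤ n) (ha : 0 < a) (hq : 0 < q) :
    ∫ x in (0:ℝ)..1, 1 / (a * x ^ n + q) ≤ π * ((q / a) ^ (n : ℝ)⁻¹ / q) := by
  rw [integral_one_div_mul_pow_add_eq (by omega) ha hq, mul_comm π]
  exact mul_le_mul_of_nonneg_left (integral_one_div_pow_add_one_le_pi hn (by positivity))
    (by positivity)

lemma le_integral_one_div_mul_pow_add (hn : n ≠ 0) (hq : 0 < q) (hqa : q ≤ a) :
    (q / a) ^ (n : ℝ)⁻¹ / q / 2 ≤ ∫ x in (0:ℝ)..1, 1 / (a * x ^ n + q) := by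
  have ha : 0 < a := hq.trans_le hqa
  have hs1 : (q / a) ^ (n : ℝ)⁻¹ ≤ 1 :=
    rpow_le_one (by positivity) ((div_le_one ha).2 hqa) (by positivity)
  rw [integral_one_div_mul_pow_add_eq hn ha hq, div_eq_mul_one_div _ 2]
  exact mul_le_mul_of_nonneg_left
    (half_le_integral_one_div_pow_add_one (one_le_inv_iff₀.2 ⟨by positivity, hs1⟩))
    (by positivity)

lemma antitoneOn_integral_one_div_mul_pow_add (hq : 0 < q) :
    AntitoneOn (fun a : ℝ => ∫ x in (0:ℝ)..1, 1 / (a * x ^ n + q)) (Ici 0) := by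
  intro a (ha : 0 ≤ a) b hb hab
  refine intervalIntegral.integral_mono_on zero_le_one
    (intervalIntegrable_one_div_mul_pow_add hb hq le_rfl zero_le_one)
    (intervalIntegrable_one_div_mul_pow_add ha hq le_rfl zero_le_one) fun x hx => ?_
  have hxn : 0 ≤ x ^ n := pow_nonneg hx.1 n
  exact one_div_le_one_div_of_le (by positivity) (by nlinarith)

end InnerIntegral

section DoubleIntegral

variable {m n : ℕ} {q : ℝ}

lemma rpow_inv_natCast_div_self (hq : 0 < q) :
    q ^ (n : ℝ)⁻¹ / q = q ^ (-1 + 1 / (n : ℝ)) := by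
  rw [rpow_add hq, rpow_neg_one, one_div, div_eq_inv_mul]

lemma div_pow_rpow_inv_natCast_div_self {x : ℝ} (hq : 0 < q) (hx : 0 < x) :
    (q / x ^ m) ^ (n : ℝ)⁻¹ / q = q ^ (-1 + 1 / (n : ℝ)) * x ^ (-(m / n : ℝ)) := by
  rw [← rpow_inv_natCast_div_self hq, div_rpow hq.le (by positivity), ← rpow_natCast x m,
    ← rpow_mul hx.le, rpow_neg hx.le, div_eq_mul_inv (m : ℝ)]
  ring

lemma intervalIntegrable_integral_one_div_pow_mul_pow_add (hq : 0 < q) :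
    IntervalIntegrable (fun x₁ : ℝ => ∫ x₂ in (0:ℝ)..1, 1 / (x₁ ^ m * x₂ ^ n + q)) volume 0 1 := by
  refine AntitoneOn.intervalIntegrable ?_
  rw [uIcc_of_le zero_le_one]
  exact (antitoneOn_integral_one_div_mul_pow_add hq).comp_MonotoneOn
    (pow_left_monotoneOn.mono Icc_subset_Ici_self)
    fun x hx => pow_nonneg hx.1 m

lemma le_integral_integral_one_div_pow_mul_pow_add (hn : n ≠ 0) (hq : 0 < q) (hq1 : q ≤ 1) :
    q ^ (-1 + 1 / (n : ℝ)) / 2 ≤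
      ∫ x₁ in (0:ℝ)..1, ∫ x₂ in (0:ℝ)..1, 1 / (x₁ ^ m * x₂ ^ n + q) := by
  have hJ1 := le_integral_one_div_mul_pow_add hn hq hq1
  rw [div_one, rpow_inv_natCast_div_self hq] at hJ1
  calc q ^ (-1 + 1 / (n : ℝ)) / 2 ≤ ∫ _ in (0:ℝ)..1, ∫ x₂ in (0:ℝ)..1, 1 / (1 * x₂ ^ n + q) := by
        simpa using hJ1
    _ ≤ ∫ x₁ in (0:ℝ)..1, ∫ x₂ in (0:ℝ)..1, 1 / (x₁ ^ m * x₂ ^ n + q) :=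
        intervalIntegral.integral_mono_on zero_le_one intervalIntegrable_const
          (intervalIntegrable_integral_one_div_pow_mul_pow_add hq) fun x hx =>
            antitoneOn_integral_one_div_mul_pow_add hq (pow_nonneg hx.1 m)
              (mem_Ici.2 zero_le_one) (pow_le_one₀ hx.1 hx.2)

lemma integral_integral_one_div_pow_mul_pow_add_le (hn : 2 ≤ n) (hmn : m < n) (hq : 0 < q) :
    ∫ x₁ in (0:ℝ)..1, ∫ x₂ in (0:ℝ)..1, 1 / (x₁ ^ m * x₂ ^ n + q) ≤
      π / (1 - m / n) * q ^ (-1 + 1 / (n : ℝ)) := by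
  have hmn' : (m / n : ℝ) < 1 := (div_lt_one (by positivity)).2 (by exact_mod_cast hmn)
  calc ∫ x₁ in (0:ℝ)..1, ∫ x₂ in (0:ℝ)..1, 1 / (x₁ ^ m * x₂ ^ n + q)
      ≤ ∫ x in (0:ℝ)..1, π * q ^ (-1 + 1 / (n : ℝ)) * x ^ (-(m / n : ℝ)) := by
        refine intervalIntegral.integral_mono_on_of_le_Ioo zero_le_one
          (intervalIntegrable_integral_one_div_pow_mul_pow_add hq)
          ((intervalIntegral.intervalIntegrable_rpow' (by linarith)).const_mul _) fun x hx => ?_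
        rw [mul_assoc, ← div_pow_rpow_inv_natCast_div_self hq hx.1]
        exact integral_one_div_mul_pow_add_le hn (pow_pos hx.1 m) hq
    _ = π / (1 - m / n) * q ^ (-1 + 1 / (n : ℝ)) := by
        rw [intervalIntegral.integral_const_mul, integral_rpow (Or.inl (by linarith)),
          one_rpow, zero_rpow (by linarith)]
        field_simp
        ring

end DoubleIntegral

/-- Theorem 4.3, Cases 1 and 2: for positive integers `i₂ > i₁ ≥ 1`,
`∫₀¹ ∫₀¹ 1/(x₁^{i₁}·x₂^{i₂} + q) dx₂ dx₁ = Θ(q^(−1 + 1/i₂))` as `q → 0⁺`. -/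
theorem two_dim_monomial_scaling_distinct (i₁ i₂ : ℕ) (h1 : 1 ≤ i₁) (h2 : i₁ < i₂) :
    IsThetaAtZero
      (fun q : ℝ => ∫ x₁ in (0:ℝ)..1, ∫ x₂ in (0:ℝ)..1, 1 / (x₁ ^ i₁ * x₂ ^ i₂ + q))
      (fun q : ℝ => q ^ (-1 + 1/(i₂:ℝ))) := by
  have hi₂ : (0 : ℝ) < i₂ := by exact_mod_cast Nat.zero_lt_of_lt h2
  have hgap : 0 < 1 - (i₁ / i₂ : ℝ) ∧ 1 - (i₁ / i₂ : ℝ) ≤ 1 := by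
    refine ⟨sub_pos.2 ((div_lt_one hi₂).2 (by exact_mod_cast h2)), ?_⟩
    have : (0 : ℝ) ≤ i₁ / i₂ := by positivity
    linarith
  refine ⟨1 / 2, π / (1 - i₁ / i₂), 1, one_half_pos, ?_, one_pos, fun q hq hq1 => ⟨?_, ?_⟩⟩
  · rw [le_div_iff₀ hgap.1]
    nlinarith [pi_gt_three]
  · rw [one_div_mul_eq_div]
    exact le_integral_integral_one_div_pow_mul_pow_add (by omega) hq hq1.le
  · exact integral_integral_one_div_pow_mul_pow_add_le (by omega) h2 hq
end

section
/- Let i₁, i₃ be positive integers with i₃ > i₁ ≥ 1. Then the triple integral ∫₀¹ ∫₀¹ ∫₀¹ 1/(x₁^{i₁}·x₂^{i₃}·x₃^{i₃} + q) dx₃ dx₂ dx₁ satisfies ∫₀¹ ∫₀¹ ∫₀¹ 1/(x₁^{i₁}·x₂^{i₃}·x₃^{i₃} + q) dx₃ dx₂ dx₁ = Θ(q^(−1 + 1/i₃)·(−log q)) as q → 0⁺. -/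
/-!
Write `F(s) = ∫₀¹ dx / (s xᵇ + q)` with `b = i₃ ≥ 2`. Below the crossover point
`m = (q / s)^(1/b)` the integrand is comparable to `1 / q`, above it to `1 / (s xᵇ)`, whose
integral over `[m, ∞)` is again of order `m / q` because `b > 1`; hence `F(s) ≍ (q / s)^(1/b) / q`.
Feeding `s = t yᵇ` into this gives an integrand `≍ (q / t)^(1/b) / (q y)` above the crossover
`y = (q / t)^(1/b)`, and `∫ dy / y` over `[(q / t)^(1/b), 1]` produces the factor `-log q`.
The last variable enters only through `t = x^i₁`: for the upper bound it contributes
`∫₀¹ x^(-i₁/i₃) dx`, finite since `i₁ < i₃`; for the lower bound `t` may be replaced by `1`.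
-/

open MeasureTheory Filter Topology

open Real Set intervalIntegral

theorem integral_le_mul_add_integral_of_le {f g : ℝ → ℝ} {a m b A : ℝ} (ham : a ≤ m)
    (hmb : m ≤ b) (hf : IntervalIntegrable f volume a b) (hg : IntervalIntegrable g volume m b)
    (hfA : ∀ x ∈ Icc a m, f x ≤ A) (hfg : ∀ x ∈ Icc m b, f x ≤ g x) :
    ∫ x in a..b, f x ≤ (m - a) * A + ∫ x in m..b, g x := by
  have hf_am : IntervalIntegrable f volume a m :=
    hf.mono_set (uIcc_subset_uIcc_left (mem_uIcc_of_le ham hmb))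
  have hf_mb : IntervalIntegrable f volume m b :=
    hf.mono_set (uIcc_subset_uIcc_right (mem_uIcc_of_le ham hmb))
  have h_am := integral_mono_on ham hf_am intervalIntegrable_const hfA
  have h_mb := integral_mono_on hmb hf_mb hg hfg
  rw [intervalIntegral.integral_const, smul_eq_mul] at h_am
  rw [← integral_add_adjacent_intervals hf_am hf_mb]
  linarith

theorem div_pow_rpow_inv_natCast {x y : ℝ} {b : ℕ} (hx : 0 ≤ x) (hy : 0 ≤ y) (hb : b ≠ 0) :
    (x / y ^ b) ^ (b⁻¹ : ℝ) = x ^ (b⁻¹ : ℝ) / y := by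
  rw [div_rpow hx (by positivity), pow_rpow_inv_natCast hy hb]

namespace MonomialIntegral

/-- The absolute value makes the integrand continuous on all of `ℝ` without changing the
integral over `[0, 1]`. -/
noncomputable def monomialIntegral₁ (b : ℕ) (q s : ℝ) : ℝ :=
  ∫ x in (0:ℝ)..1, 1 / (s * |x| ^ b + q)

noncomputable def monomialIntegral₂ (b : ℕ) (q t : ℝ) : ℝ :=
  ∫ y in (0:ℝ)..1, monomialIntegral₁ b q (t * |y| ^ b)

variable {b : ℕ} {q : ℝ}

theorem mul_abs_pow_add_pos {s : ℝ} (hs : 0 ≤ s) (hq : 0 < q) (x : ℝ) : 0 < s * |x| ^ b + q :=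
  add_pos_of_nonneg_of_pos (mul_nonneg hs (by positivity)) hq

theorem continuous_one_div_mul_abs_pow_add {X : Type*} [TopologicalSpace X] {c : X → ℝ}
    (hc : Continuous c) (hc₀ : ∀ x, 0 ≤ c x) (hq : 0 < q) :
    Continuous fun p : X × ℝ => 1 / (c p.1 * |p.2| ^ b + q) :=
  continuous_const.div (by fun_prop) fun p => (mul_abs_pow_add_pos (hc₀ p.1) hq p.2).ne'

theorem continuous_monomialIntegral₁_comp {X : Type*} [TopologicalSpace X] {c : X → ℝ}
    (hc : Continuous c) (hc₀ : ∀ x, 0 ≤ c x) (hq : 0 < q) :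
    Continuous fun x => monomialIntegral₁ b q (c x) :=
  continuous_parametric_intervalIntegral_of_continuous'
    (continuous_one_div_mul_abs_pow_add hc hc₀ hq) 0 1

theorem continuous_monomialIntegral₂_comp {X : Type*} [TopologicalSpace X] {c : X → ℝ}
    (hc : Continuous c) (hc₀ : ∀ x, 0 ≤ c x) (hq : 0 < q) :
    Continuous fun x => monomialIntegral₂ b q (c x) :=
  continuous_parametric_intervalIntegral_of_continuous'
    (continuous_monomialIntegral₁_comp (c := fun p : X × ℝ => c p.1 * |p.2| ^ b) (by fun_prop)
      (fun p => mul_nonneg (hc₀ p.1) (by positivity)) hq) 0 1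

theorem intervalIntegrable_one_div_mul_abs_pow_add {s : ℝ} (hs : 0 ≤ s) (hq : 0 < q)
    (u v : ℝ) : IntervalIntegrable (fun x => 1 / (s * |x| ^ b + q)) volume u v :=
  (continuous_const.div (by fun_prop) fun x => (mul_abs_pow_add_pos hs hq x).ne').intervalIntegrable
    u v

theorem monomialIntegral₁_nonneg {s : ℝ} (hs : 0 ≤ s) (hq : 0 < q) :
    0 ≤ monomialIntegral₁ b q s :=
  integral_nonneg zero_le_one fun x _ => (one_div_pos.2 (mul_abs_pow_add_pos hs hq x)).le

theorem monomialIntegral₁_le_one_div {s : ℝ} (hs : 0 ≤ s) (hq : 0 < q) :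
    monomialIntegral₁ b q s ≤ 1 / q := by
  have h := integral_mono_on zero_le_one
    (intervalIntegrable_one_div_mul_abs_pow_add (b := b) hs hq 0 1)
    intervalIntegrable_const fun x _ =>
      one_div_le_one_div_of_le hq (le_add_of_nonneg_left (mul_nonneg hs (by positivity)))
  unfold monomialIntegral₁
  simpa using h

theorem antitoneOn_monomialIntegral₁ (hq : 0 < q) :
    AntitoneOn (monomialIntegral₁ b q) (Ici 0) :=
  fun s hs s' _ hss' => integral_mono_on zero_le_one
    (intervalIntegrable_one_div_mul_abs_pow_add (le_trans hs hss') hq 0 1)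
    (intervalIntegrable_one_div_mul_abs_pow_add hs hq 0 1) fun x _ =>
      one_div_le_one_div_of_le (mul_abs_pow_add_pos hs hq x) (by gcongr)

theorem monomialIntegral₁_le (hb : 2 ≤ b) (hq : 0 < q) {s : ℝ} (hs : 0 < s) :
    monomialIntegral₁ b q s ≤ 2 * (q / s) ^ (b⁻¹ : ℝ) / q := by
  set m := (q / s) ^ (b⁻¹ : ℝ)
  have hm : 0 < m := by positivity
  have hb' : (2 : ℝ) ≤ b := by exact_mod_cast hb
  rcases le_or_gt m 1 with hm₁ | hm₁
  · have h_tail : ∀ x ∈ Icc m 1, 1 / (s * |x| ^ b + q) ≤ s⁻¹ * x ^ (-(b : ℝ)) := by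
      intro x hx
      have hx : 0 < x := hm.trans_le hx.1
      rw [abs_of_pos hx, rpow_neg hx.le, rpow_natCast, ← mul_inv, ← one_div]
      exact one_div_le_one_div_of_le (by positivity) (le_add_of_nonneg_right hq.le)
    have h_rpow : m ^ (-(b : ℝ) + 1) = m * (s / q) := by
      rw [rpow_add hm, rpow_neg hm.le, rpow_natCast,
        rpow_inv_natCast_pow (by positivity) (by omega), rpow_one, inv_div, mul_comm]
    have h_int : ∫ x in m..1, s⁻¹ * x ^ (-(b : ℝ)) ≤ m / q := by
      rw [intervalIntegral.integral_const_mul,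
        integral_rpow (Or.inr ⟨by linarith, notMem_uIcc_of_lt hm one_pos⟩), one_rpow, h_rpow]
      have hb₁ : (-(b : ℝ) + 1) ≠ 0 := by linarith
      have hb₂ : (b : ℝ) - 1 ≠ 0 := by linarith
      calc s⁻¹ * ((1 - m * (s / q)) / (-(b : ℝ) + 1)) = (m / q - s⁻¹) / (b - 1) := by
            field_simp; ring
        _ ≤ (m / q) / (b - 1) :=
            div_le_div_of_nonneg_right (by linarith [inv_pos.2 hs]) (by linarith)
        _ ≤ m / q := div_le_self (by positivity) (by linarith)
    calc monomialIntegral₁ b q s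
        ≤ (m - 0) * (1 / q) + ∫ x in m..1, s⁻¹ * x ^ (-(b : ℝ)) :=
          integral_le_mul_add_integral_of_le hm.le hm₁
            (intervalIntegrable_one_div_mul_abs_pow_add hs.le hq 0 1)
            ((intervalIntegrable_rpow (Or.inr (notMem_uIcc_of_lt hm one_pos))).const_mul _)
            (fun x _ => one_div_le_one_div_of_le hq (le_add_of_nonneg_left (by positivity)))
            h_tail
      _ ≤ (m - 0) * (1 / q) + m / q := by gcongr
      _ = 2 * m / q := by ring
  · calc monomialIntegral₁ b q s ≤ 1 / q := monomialIntegral₁_le_one_div hs.le hq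
      _ ≤ 2 * m / q := by gcongr; linarith

theorem le_monomialIntegral₁ (hb : b ≠ 0) (hq : 0 < q) {s : ℝ} (hqs : q ≤ s) :
    (q / s) ^ (b⁻¹ : ℝ) / (2 * q) ≤ monomialIntegral₁ b q s := by
  have hs : 0 < s := hq.trans_le hqs
  set m := (q / s) ^ (b⁻¹ : ℝ)
  have hm : 0 < m := by positivity
  have hm₁ : m ≤ 1 := rpow_le_one (by positivity) ((div_le_one hs).2 hqs) (by positivity)
  have h_head : ∀ x ∈ Icc 0 m, 1 / (2 * q) ≤ 1 / (s * |x| ^ b + q) := by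
    intro x hx
    have hxm : |x| ^ b ≤ m ^ b :=
      pow_le_pow_left₀ (abs_nonneg x) (by rw [abs_of_nonneg hx.1]; exact hx.2) b
    rw [rpow_inv_natCast_pow (by positivity) hb] at hxm
    have : s * |x| ^ b ≤ q := by
      calc s * |x| ^ b ≤ s * (q / s) := by gcongr
        _ = q := mul_div_cancel₀ q hs.ne'
    exact one_div_le_one_div_of_le (by positivity) (by linarith)
  calc m / (2 * q) = ∫ x in (0:ℝ)..m, 1 / (2 * q) := by simp; ring
    _ ≤ ∫ x in (0:ℝ)..m, 1 / (s * |x| ^ b + q) :=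
        integral_mono_on hm.le intervalIntegrable_const
          (intervalIntegrable_one_div_mul_abs_pow_add hs.le hq 0 m) h_head
    _ ≤ monomialIntegral₁ b q s :=
        integral_mono_interval le_rfl hm.le hm₁
          (Eventually.of_forall fun x => (one_div_pos.2 (by positivity)).le)
          (intervalIntegrable_one_div_mul_abs_pow_add hs.le hq 0 1)

theorem antitoneOn_monomialIntegral₂ (hq : 0 < q) :
    AntitoneOn (monomialIntegral₂ b q) (Ici 0) :=
  fun t (ht : 0 ≤ t) t' (ht' : 0 ≤ t') htt' => integral_mono_on zero_le_one
    ((continuous_monomialIntegral₁_comp (c := fun y => t' * |y| ^ b) (by fun_prop)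
      (fun y => mul_nonneg ht' (by positivity)) hq).intervalIntegrable 0 1)
    ((continuous_monomialIntegral₁_comp (c := fun y => t * |y| ^ b) (by fun_prop)
      (fun y => mul_nonneg ht (by positivity)) hq).intervalIntegrable 0 1) fun y _ =>
    antitoneOn_monomialIntegral₁ hq (mul_nonneg ht (by positivity))
      (mul_nonneg ht' (by positivity)) (by gcongr)

theorem monomialIntegral₂_le (hb : 2 ≤ b) (hq : 0 < q) (hq₁ : q ≤ 1) {t : ℝ} (ht : 0 < t)
    (ht₁ : t ≤ 1) :
    monomialIntegral₂ b q t ≤ (q / t) ^ (b⁻¹ : ℝ) * (1 - log q) / q := by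
  set M := (q / t) ^ (b⁻¹ : ℝ)
  have hM : 0 < M := by positivity
  have hb' : (2 : ℝ) ≤ b := by exact_mod_cast hb
  have hL : 0 ≤ -log q := neg_nonneg.2 (log_nonpos hq.le hq₁)
  have h_int := (continuous_monomialIntegral₁_comp (b := b) (c := fun y : ℝ => t * |y| ^ b)
    (by fun_prop) (fun y => mul_nonneg ht.le (by positivity)) hq).intervalIntegrable
      (μ := volume) 0 1
  rcases le_or_gt M 1 with hM₁ | hM₁
  · have h_tail : ∀ y ∈ Icc M 1,
        monomialIntegral₁ b q (t * |y| ^ b) ≤ 2 * M / q * y⁻¹ := by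
      intro y hy
      have hy : 0 < y := hM.trans_le hy.1
      calc monomialIntegral₁ b q (t * |y| ^ b) ≤ 2 * (q / (t * |y| ^ b)) ^ (b⁻¹ : ℝ) / q :=
            monomialIntegral₁_le hb hq (by positivity)
        _ = 2 * M / q * y⁻¹ := by
            rw [abs_of_pos hy, ← div_div,
              div_pow_rpow_inv_natCast (by positivity) hy.le (by omega)]
            ring
    have h_log : -log M ≤ -log q / b := by
      rw [log_rpow (by positivity), log_div hq.ne' ht.ne', le_div_iff₀ (by positivity)]
      have := log_nonpos ht.le ht₁
      field_simp
      linarith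
    have h_two_div : 2 * M / q * (-log q / b) ≤ M / q * -log q := by
      rw [show 2 * M / q * (-log q / b) = M / q * -log q * (2 / b) by ring]
      exact mul_le_of_le_one_right (by positivity) ((div_le_one (by positivity)).2 hb')
    calc monomialIntegral₂ b q t ≤ (M - 0) * (1 / q) + ∫ y in M..1, 2 * M / q * y⁻¹ :=
          integral_le_mul_add_integral_of_le hM.le hM₁ h_int
            ((intervalIntegrable_inv_iff.2 (Or.inr (notMem_uIcc_of_lt hM one_pos))).const_mul _)
            (fun y _ => monomialIntegral₁_le_one_div (by positivity) hq) h_tail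
      _ = M / q + 2 * M / q * -log M := by
          rw [intervalIntegral.integral_const_mul, integral_inv_of_pos hM one_pos]
          simp only [sub_zero, one_div, log_inv]
          ring
      _ ≤ M / q + 2 * M / q * (-log q / b) := by gcongr
      _ ≤ M * (1 - log q) / q := by
          linarith [show M * (1 - log q) / q = M / q + M / q * -log q by ring]
  · calc monomialIntegral₂ b q t ≤ ∫ y in (0:ℝ)..1, 1 / q :=
          integral_mono_on zero_le_one h_int intervalIntegrable_const fun y _ =>
            monomialIntegral₁_le_one_div (mul_nonneg ht.le (by positivity)) hq
      _ = 1 / q := by simp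
      _ ≤ M * (1 - log q) / q := by gcongr; nlinarith

theorem le_monomialIntegral₂_one (hb : b ≠ 0) (hq : 0 < q) (hq₁ : q ≤ 1) :
    q ^ (b⁻¹ : ℝ) * -log q / (2 * b * q) ≤ monomialIntegral₂ b q 1 := by
  set M := q ^ (b⁻¹ : ℝ)
  have hM : 0 < M := by positivity
  have hM₁ : M ≤ 1 := rpow_le_one hq.le hq₁ (by positivity)
  have h_tail : ∀ y ∈ Icc M 1, M / (2 * q) * y⁻¹ ≤ monomialIntegral₁ b q (1 * |y| ^ b) := by
    intro y hyM
    have hy : 0 < y := hM.trans_le hyM.1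
    have hqy : q ≤ 1 * |y| ^ b := by
      rw [one_mul, abs_of_pos hy, ← rpow_inv_natCast_pow hq.le hb]
      exact pow_le_pow_left₀ hM.le hyM.1 b
    calc M / (2 * q) * y⁻¹ = (q / (1 * |y| ^ b)) ^ (b⁻¹ : ℝ) / (2 * q) := by
          rw [one_mul, abs_of_pos hy, div_pow_rpow_inv_natCast hq.le hy.le hb]; ring
      _ ≤ monomialIntegral₁ b q (1 * |y| ^ b) := le_monomialIntegral₁ hb hq hqy
  have h_int := (continuous_monomialIntegral₁_comp (b := b) (c := fun y : ℝ => 1 * |y| ^ b)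
    (by fun_prop) (fun y => by positivity) hq).intervalIntegrable (μ := volume) 0 1
  calc q ^ (b⁻¹ : ℝ) * -log q / (2 * b * q) = ∫ y in M..1, M / (2 * q) * y⁻¹ := by
        rw [intervalIntegral.integral_const_mul, integral_inv_of_pos hM one_pos, one_div,
          log_inv, log_rpow hq]
        field_simp
        simp only [M, one_div]
        ring
    _ ≤ ∫ y in M..1, monomialIntegral₁ b q (1 * |y| ^ b) :=
        integral_mono_on hM₁
          ((intervalIntegrable_inv_iff.2 (Or.inr (notMem_uIcc_of_lt hM one_pos))).const_mul _)
          (h_int.mono_set (uIcc_subset_uIcc_right (mem_uIcc_of_le hM.le hM₁))) h_tail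
    _ ≤ monomialIntegral₂ b q 1 :=
        integral_mono_interval hM.le hM₁ le_rfl
          (Eventually.of_forall fun y => monomialIntegral₁_nonneg (by positivity) hq) h_int

theorem monomialIntegral₂_one_le_integral (hq : 0 < q) (a : ℕ) :
    monomialIntegral₂ b q 1 ≤ ∫ x in (0:ℝ)..1, monomialIntegral₂ b q (|x| ^ a) := by
  have h := integral_mono_on (μ := volume) zero_le_one intervalIntegrable_const
    ((continuous_monomialIntegral₂_comp (c := fun x : ℝ => |x| ^ a) (by fun_prop)
      (fun x => by positivity) hq).intervalIntegrable 0 1) fun x hx =>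
    antitoneOn_monomialIntegral₂ (b := b) hq (mem_Ici.2 (by positivity)) (mem_Ici.2 zero_le_one)
      (pow_le_one₀ (abs_nonneg x) (abs_le.2 ⟨by linarith [hx.1], hx.2⟩))
  simpa using h

theorem integral_monomialIntegral₂_le (hb : 2 ≤ b) {a : ℕ} (hab : a < b) (hq : 0 < q)
    (hq₁ : q ≤ 1) :
    ∫ x in (0:ℝ)..1, monomialIntegral₂ b q (|x| ^ a)
      ≤ b / (b - a) * (q ^ (b⁻¹ : ℝ) * (1 - log q) / q) := by
  set K := q ^ (b⁻¹ : ℝ) * (1 - log q) / q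
  have hab' : (a : ℝ) < b := by exact_mod_cast hab
  have hexp : -1 < -((a : ℝ) / b) := by
    rw [neg_lt_neg_iff, div_lt_one (by linarith)]; exact hab'
  have h_pt : ∀ x ∈ Ioo (0:ℝ) 1,
      monomialIntegral₂ b q (|x| ^ a) ≤ K * x ^ (-((a : ℝ) / b)) := by
    intro x hx
    rw [abs_of_pos hx.1]
    calc monomialIntegral₂ b q (x ^ a) ≤ (q / x ^ a) ^ (b⁻¹ : ℝ) * (1 - log q) / q :=
          monomialIntegral₂_le hb hq hq₁ (pow_pos hx.1 a) (pow_le_one₀ hx.1.le hx.2.le)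
      _ = K * x ^ (-((a : ℝ) / b)) := by
          rw [div_rpow hq.le (pow_pos hx.1 a).le, ← rpow_natCast, ← rpow_mul hx.1.le,
            rpow_neg hx.1.le, div_eq_mul_inv (a : ℝ)]
          ring
  calc ∫ x in (0:ℝ)..1, monomialIntegral₂ b q (|x| ^ a)
      ≤ ∫ x in (0:ℝ)..1, K * x ^ (-((a : ℝ) / b)) :=
        integral_mono_on_of_le_Ioo zero_le_one
          ((continuous_monomialIntegral₂_comp (c := fun x : ℝ => |x| ^ a) (by fun_prop)
            (fun x => by positivity) hq).intervalIntegrable 0 1)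
          ((intervalIntegrable_rpow' hexp).const_mul K) h_pt
    _ = b / (b - a) * K := by
        rw [intervalIntegral.integral_const_mul, integral_rpow (Or.inl hexp), one_rpow,
          zero_rpow (by linarith)]
        field_simp
        ring

theorem integral_monomial_eq_integral_monomialIntegral₂ (a b : ℕ) (q : ℝ) :
    ∫ x₁ in (0:ℝ)..1, ∫ x₂ in (0:ℝ)..1, ∫ x₃ in (0:ℝ)..1, 1 / (x₁ ^ a * x₂ ^ b * x₃ ^ b + q)
      = ∫ x in (0:ℝ)..1, monomialIntegral₂ b q (|x| ^ a) := by
  refine integral_congr fun x₁ hx₁ =>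
    integral_congr fun x₂ hx₂ => integral_congr fun x₃ hx₃ => ?_
  rw [uIcc_of_le zero_le_one] at hx₁ hx₂ hx₃
  simp only [abs_of_nonneg hx₁.1, abs_of_nonneg hx₂.1, abs_of_nonneg hx₃.1]

end MonomialIntegral

open MonomialIntegral

/-- Theorem 4.4, Cases 3 and 7: for positive integers `i₃ > i₁ ≥ 1`,
`∫₀¹ ∫₀¹ ∫₀¹ 1/(x₁^{i₁}·x₂^{i₃}·x₃^{i₃} + q) dx₃ dx₂ dx₁ = Θ(q^(−1 + 1/i₃)·(−log q))`
as `q → 0⁺`. -/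
theorem three_dim_monomial_scaling_two_max (i₁ i₃ : ℕ) (h1 : 1 ≤ i₁) (h3 : i₁ < i₃) :
    IsThetaAtZero
      (fun q : ℝ => ∫ x₁ in (0:ℝ)..1, ∫ x₂ in (0:ℝ)..1, ∫ x₃ in (0:ℝ)..1,
        1 / (x₁ ^ i₁ * x₂ ^ i₃ * x₃ ^ i₃ + q))
      (fun q : ℝ => q ^ (-1 + 1/(i₃:ℝ)) * (-Real.log q)) := by
  have hb : 2 ≤ i₃ := by omega
  have hb' : (2 : ℝ) ≤ i₃ := by exact_mod_cast hb
  have hab : (i₁ : ℝ) < i₃ := by exact_mod_cast h3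
  refine ⟨1 / (2 * i₃), 2 * i₃ / (i₃ - i₁), exp (-1), by positivity, ?_, exp_pos _,
    fun q hq hq₀ => ?_⟩
  · calc 1 / (2 * (i₃ : ℝ)) ≤ 1 := by rw [div_le_one (by positivity)]; linarith
      _ ≤ 2 * i₃ / (i₃ - i₁) := by
          rw [le_div_iff₀ (by linarith)]; linarith [(Nat.cast_nonneg i₁ : (0 : ℝ) ≤ i₁)]
  have hL : 1 < -log q := by linarith [(log_lt_iff_lt_exp hq).2 hq₀]
  have hq₁ : q ≤ 1 := hq₀.le.trans (exp_le_one_iff.2 (by norm_num))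
  have hR : q ^ (-1 + 1 / (i₃ : ℝ)) = q ^ ((i₃ : ℝ)⁻¹) / q := by
    rw [one_div, add_comm, rpow_add hq, rpow_neg_one, div_eq_mul_inv]
  simp only [integral_monomial_eq_integral_monomialIntegral₂, hR]
  constructor
  · calc 1 / (2 * (i₃ : ℝ)) * (q ^ (i₃⁻¹ : ℝ) / q * -log q)
        = q ^ (i₃⁻¹ : ℝ) * -log q / (2 * i₃ * q) := by ring
      _ ≤ monomialIntegral₂ i₃ q 1 := le_monomialIntegral₂_one (by omega) hq hq₁
      _ ≤ _ := monomialIntegral₂_one_le_integral hq i₁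
  · calc _ ≤ i₃ / (i₃ - i₁) * (q ^ (i₃⁻¹ : ℝ) * (1 - log q) / q) :=
          integral_monomialIntegral₂_le hb h3 hq hq₁
      _ ≤ i₃ / (i₃ - i₁) * (q ^ (i₃⁻¹ : ℝ) * (2 * -log q) / q) := by gcongr; linarith
      _ = 2 * i₃ / (i₃ - i₁) * (q ^ (i₃⁻¹ : ℝ) / q * -log q) := by ring
end

section
/- Let i > 1 be an integer. Then the triple integral ∫₀¹ ∫₀¹ ∫₀¹ 1/((x₁·x₂·x₃)^i + q) dx₃ dx₂ dx₁ satisfies ∫₀¹ ∫₀¹ ∫₀¹ 1/((x₁·x₂·x₃)^i + q) dx₃ dx₂ dx₁ = Θ(q^(−1 + 1/i)·(log q)²) as q → 0⁺. -/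
/-!
The substitution `u = a x` turns `∫₀¹ g (a x) dx` into the Hardy average `H g a = a⁻¹ ∫₀ᵃ g`, so
the triple integral is `∫₀¹ H (H κ)` with `κ u = 1 / (uⁱ + q)`. Write `q = tⁱ`. For `a ≥ t` the
primitive `∫₀ᵃ κ` is comparable to `t / tⁱ`: `κ ≍ 1 / tⁱ` on `[0, t]`, and since `i ≥ 2`,
`κ u ≤ 1 / (t^(i-2) u²)` on `[t, ∞)`. Hence `H κ u ≍ (t / tⁱ) / u` on `[t, 1]`, and each further
average over `[t, a]` of `u⁻¹ logᵏ (u / t)` gains a factor `log (a / t)`. Both bounds on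
`∫₀¹ H (H κ)` are therefore multiples of `(t / tⁱ) log² (1 / t) = q^(-1 + 1/i) (log q)² / i²`.
-/

open MeasureTheory Filter Topology

open intervalIntegral Real Set

noncomputable def hardyAvg (g : ℝ → ℝ) (a : ℝ) : ℝ :=
  a⁻¹ * ∫ u in 0..a, g u

theorem integral_comp_mul_left_eq_hardyAvg (g : ℝ → ℝ) {a : ℝ} (ha : a ≠ 0) :
    ∫ x in 0..1, g (a * x) = hardyAvg g a := by
  rw [integral_comp_mul_left g ha, mul_zero, mul_one, smul_eq_mul, hardyAvg]

theorem integral_integral_integral_mul_eq_integral_hardyAvg (g : ℝ → ℝ) :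
    ∫ x in 0..1, ∫ y in 0..1, ∫ z in 0..1, g (x * y * z) =
      ∫ x in 0..1, hardyAvg (hardyAvg g) x := by
  refine integral_congr_ae (ae_of_all _ fun x hx => ?_)
  rw [uIoc_of_le zero_le_one] at hx
  rw [← integral_comp_mul_left_eq_hardyAvg _ hx.1.ne']
  refine integral_congr_ae (ae_of_all _ fun y hy => ?_)
  rw [uIoc_of_le zero_le_one] at hy
  exact integral_comp_mul_left_eq_hardyAvg _ (mul_pos hx.1 hy.1).ne'

section Bounded

variable {g : ℝ → ℝ} {M : ℝ}

theorem hardyAvg_mem_Icc (hgM : ∀ u, 0 ≤ u → g u ∈ Icc 0 M) {a : ℝ} (ha : 0 ≤ a) :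
    hardyAvg g a ∈ Icc 0 M := by
  rcases ha.eq_or_lt with rfl | ha
  · simpa [hardyAvg] using (hgM 0 le_rfl).1.trans (hgM 0 le_rfl).2
  have hnonneg : 0 ≤ ∫ u in 0..a, g u := integral_nonneg ha.le fun u hu => (hgM u hu.1).1
  have hle : ∫ u in 0..a, g u ≤ M * a := by
    have := norm_integral_le_of_norm_le_const (a := 0) (b := a) (C := M) (f := g) fun u hu => by
      rw [uIoc_of_le ha.le] at hu
      rw [Real.norm_of_nonneg (hgM u hu.1.le).1]
      exact (hgM u hu.1.le).2
    rwa [Real.norm_of_nonneg hnonneg, sub_zero, abs_of_pos ha] at this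
  refine ⟨mul_nonneg (inv_nonneg.2 ha.le) hnonneg, ?_⟩
  rw [hardyAvg, inv_mul_le_iff₀ ha, mul_comm]
  exact hle

theorem intervalIntegrable_hardyAvg (hg : ∀ b, 0 ≤ b → IntervalIntegrable g volume 0 b)
    (hgM : ∀ u, 0 ≤ u → g u ∈ Icc 0 M) {b : ℝ} (hb : 0 ≤ b) :
    IntervalIntegrable (hardyAvg g) volume 0 b := by
  have hprim : ContinuousOn (fun a => ∫ u in 0..a, g u) (Icc 0 b) := by
    have hgi : IntegrableOn g (uIcc 0 b) := by
      rw [uIcc_of_le hb]; exact (intervalIntegrable_iff_integrableOn_Icc_of_le hb).1 (hg b hb)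
    simpa only [uIcc_of_le hb] using continuousOn_primitive_interval hgi
  have hcont : ContinuousOn (hardyAvg g) (Ioc 0 b) :=
    (continuousOn_inv₀.mono fun _ hu => hu.1.ne').mul (hprim.mono Ioc_subset_Icc_self)
  refine IntervalIntegrable.mono_fun' (g := fun _ => M) intervalIntegrable_const ?_ ?_
  · rw [uIoc_of_le hb]
    exact hcont.aestronglyMeasurable measurableSet_Ioc
  · rw [uIoc_of_le hb]
    refine ae_restrict_of_forall_mem measurableSet_Ioc fun u hu => ?_
    have := hardyAvg_mem_Icc hgM hu.1.le
    exact (Real.norm_of_nonneg this.1).trans_le this.2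

end Bounded

section Splitting

variable {g h : ℝ → ℝ}

theorem integral_le_mul_add_integral {t b M : ℝ} (ht : 0 ≤ t) (htb : t ≤ b)
    (hg : IntervalIntegrable g volume 0 b) (hh : IntervalIntegrable h volume t b)
    (hgM : ∀ u ∈ Icc 0 t, g u ≤ M) (hgh : ∀ u ∈ Icc t b, g u ≤ h u) :
    ∫ u in 0..b, g u ≤ M * t + ∫ u in t..b, h u := by
  have hg₁ : IntervalIntegrable g volume 0 t :=
    hg.mono_set (uIcc_subset_uIcc_left (by rw [uIcc_of_le (ht.trans htb)]; exact ⟨ht, htb⟩))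
  have hg₂ : IntervalIntegrable g volume t b :=
    hg.mono_set (uIcc_subset_uIcc_right (by rw [uIcc_of_le (ht.trans htb)]; exact ⟨ht, htb⟩))
  have hconst : ∫ _ in 0..t, M = M * t := by simp [mul_comm]
  rw [← integral_add_adjacent_intervals hg₁ hg₂, ← hconst]
  exact add_le_add (integral_mono_on ht hg₁ intervalIntegrable_const hgM)
    (integral_mono_on htb hg₂ hh hgh)

theorem integral_le_integral_of_le_on_subinterval {c d b : ℝ} (hc : 0 ≤ c) (hcd : c ≤ d)
    (hdb : d ≤ b) (hg : IntervalIntegrable g volume 0 b) (hh : IntervalIntegrable h volume c d)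
    (hg0 : ∀ u ∈ Icc 0 b, 0 ≤ g u) (hhg : ∀ u ∈ Icc c d, h u ≤ g u) :
    ∫ u in c..d, h u ≤ ∫ u in 0..b, g u := by
  have hsub : uIcc c d ⊆ uIcc 0 b := by
    rw [uIcc_of_le hcd, uIcc_of_le (hc.trans (hcd.trans hdb))]
    exact Icc_subset_Icc hc hdb
  refine (integral_mono_on hcd hh (hg.mono_set hsub) hhg).trans
    (integral_mono_interval hc hcd hdb ?_ hg)
  exact ae_restrict_of_forall_mem measurableSet_Ioc fun u hu => hg0 u (Ioc_subset_Icc_self hu)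

end Splitting

section LogIntegral

variable {t a : ℝ}

theorem intervalIntegrable_inv_mul_add_mul_log (ht : 0 < t) (hta : t ≤ a) (α β : ℝ) :
    IntervalIntegrable (fun u => u⁻¹ * (α + β * log (u / t))) volume t a := by
  refine ContinuousOn.intervalIntegrable fun u hu => ?_
  rw [uIcc_of_le hta] at hu
  have hu0 : u ≠ 0 := (ht.trans_le hu.1).ne'
  fun_prop (disch := positivity)

theorem integral_inv_mul_add_mul_log (ht : 0 < t) (hta : t ≤ a) (α β : ℝ) :
    ∫ u in t..a, u⁻¹ * (α + β * log (u / t)) = α * log (a / t) + β * log (a / t) ^ 2 / 2 := by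
  have hderiv : ∀ u ∈ uIcc t a, HasDerivAt (fun u => α * log (u / t) + β * (log (u / t) ^ 2 / 2))
      (u⁻¹ * (α + β * log (u / t))) u := by
    intro u hu
    rw [uIcc_of_le hta] at hu
    have hu0 : 0 < u := ht.trans_le hu.1
    have hlog : HasDerivAt (fun u => log (u / t)) u⁻¹ u := by
      refine (((hasDerivAt_id' u).div_const t).log (div_pos hu0 ht).ne').congr_deriv ?_
      field_simp
    refine ((hlog.const_mul α).add (((hlog.pow 2).div_const 2).const_mul β)).congr_deriv ?_
    push_cast
    ring
  rw [integral_eq_sub_of_hasDerivAt hderiv (intervalIntegrable_inv_mul_add_mul_log ht hta α β)]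
  simp only [div_self ht.ne', log_one, mul_zero, ne_eq, OfNat.ofNat_ne_zero,
    not_false_eq_true, zero_pow, zero_div, add_zero, sub_zero, add_right_inj]
  ring

end LogIntegral

section Kernel

variable {i : ℕ} {t : ℝ}

theorem one_div_pow_add_pow_mem_Icc (ht : 0 < t) {u : ℝ} (hu : 0 ≤ u) :
    1 / (u ^ i + t ^ i) ∈ Icc 0 (1 / t ^ i) :=
  ⟨by positivity, one_div_le_one_div_of_le (by positivity) (le_add_of_nonneg_left (by positivity))⟩

theorem intervalIntegrable_one_div_pow_add_pow (ht : 0 < t) {b : ℝ} (hb : 0 ≤ b) :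
    IntervalIntegrable (fun u => 1 / (u ^ i + t ^ i)) volume 0 b := by
  refine ContinuousOn.intervalIntegrable fun u hu => ?_
  rw [uIcc_of_le hb] at hu
  have : u ^ i + t ^ i ≠ 0 := by have := hu.1; positivity
  fun_prop (disch := assumption)

theorem integral_inv_sq_le {a : ℝ} (ht : 0 < t) (hta : t ≤ a) :
    ∫ u in t..a, (u ^ 2)⁻¹ ≤ t⁻¹ := by
  have hne : ∀ u ∈ uIcc t a, u ≠ 0 := fun u hu => by
    rw [uIcc_of_le hta] at hu; exact (ht.trans_le hu.1).ne'
  have hderiv : ∀ u ∈ uIcc t a, HasDerivAt (fun u => -u⁻¹) (u ^ 2)⁻¹ u := fun u hu =>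
    ((hasDerivAt_inv (hne u hu)).neg).congr_deriv (neg_neg _)
  have hint : IntervalIntegrable (fun u : ℝ => (u ^ 2)⁻¹) volume t a :=
    intervalIntegrable_inv (fun u hu => pow_ne_zero 2 (hne u hu)) (by fun_prop)
  rw [integral_eq_sub_of_hasDerivAt hderiv hint]
  have : 0 ≤ a⁻¹ := inv_nonneg.2 (ht.le.trans hta)
  linarith

theorem integral_one_div_pow_add_pow_le (hi : 1 < i) (ht : 0 < t) {a : ℝ} (hta : t ≤ a) :
    ∫ u in 0..a, 1 / (u ^ i + t ^ i) ≤ 2 * (t / t ^ i) := by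
  obtain ⟨k, rfl⟩ : ∃ k, i = k + 2 := ⟨i - 2, by omega⟩
  have hdecay : ∀ u ∈ Icc t a, 1 / (u ^ (k + 2) + t ^ (k + 2)) ≤ (t ^ k)⁻¹ * (u ^ 2)⁻¹ :=
    fun u hu => by
      have hu0 : 0 < u := ht.trans_le hu.1
      rw [← mul_inv, one_div]
      refine inv_anti₀ (by positivity) ?_
      calc t ^ k * u ^ 2 ≤ u ^ k * u ^ 2 := by gcongr; exact hu.1
        _ ≤ u ^ (k + 2) + t ^ (k + 2) := by
          rw [pow_add]; exact le_add_of_nonneg_right (by positivity)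
  have hint : IntervalIntegrable (fun u : ℝ => (t ^ k)⁻¹ * (u ^ 2)⁻¹) volume t a :=
    (intervalIntegrable_inv (fun u hu => by
      rw [uIcc_of_le hta] at hu; exact pow_ne_zero 2 (ht.trans_le hu.1).ne')
      (by fun_prop)).const_mul _
  calc ∫ u in 0..a, 1 / (u ^ (k + 2) + t ^ (k + 2))
      ≤ 1 / t ^ (k + 2) * t + ∫ u in t..a, (t ^ k)⁻¹ * (u ^ 2)⁻¹ :=
        integral_le_mul_add_integral ht.le hta
          (intervalIntegrable_one_div_pow_add_pow ht (ht.le.trans hta)) hint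
          (fun u hu => (one_div_pow_add_pow_mem_Icc ht hu.1).2) hdecay
    _ ≤ 1 / t ^ (k + 2) * t + (t ^ k)⁻¹ * t⁻¹ := by
        rw [intervalIntegral.integral_const_mul]; gcongr; exact integral_inv_sq_le ht hta
    _ = 2 * (t / t ^ (k + 2)) := by field_simp; ring

theorem le_integral_one_div_pow_add_pow (ht : 0 < t) {a : ℝ} (hta : t ≤ a) :
    t / t ^ i / 2 ≤ ∫ u in 0..a, 1 / (u ^ i + t ^ i) := by
  have hnear : ∀ u ∈ Icc 0 t, 1 / (2 * t ^ i) ≤ 1 / (u ^ i + t ^ i) := fun u hu => by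
    have : u ^ i ≤ t ^ i := pow_le_pow_left₀ hu.1 hu.2 i
    have : 0 ≤ u ^ i := pow_nonneg hu.1 i
    exact one_div_le_one_div_of_le (by positivity) (by linarith)
  calc t / t ^ i / 2 = ∫ _ in 0..t, 1 / (2 * t ^ i) := by
        simp only [intervalIntegral.integral_const, sub_zero, smul_eq_mul]; field_simp
    _ ≤ _ := integral_le_integral_of_le_on_subinterval le_rfl ht.le hta
        (intervalIntegrable_one_div_pow_add_pow ht (ht.le.trans hta)) intervalIntegrable_const
        (fun u hu => (one_div_pow_add_pow_mem_Icc ht hu.1).1) hnear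

theorem hardyAvg_one_div_pow_add_pow_mem_Icc (ht : 0 < t) {u : ℝ} (hu : 0 ≤ u) :
    hardyAvg (fun u => 1 / (u ^ i + t ^ i)) u ∈ Icc 0 (1 / t ^ i) :=
  hardyAvg_mem_Icc (fun _ => one_div_pow_add_pow_mem_Icc ht) hu

theorem intervalIntegrable_hardyAvg_one_div_pow_add_pow (ht : 0 < t) {b : ℝ} (hb : 0 ≤ b) :
    IntervalIntegrable (hardyAvg fun u => 1 / (u ^ i + t ^ i)) volume 0 b :=
  intervalIntegrable_hardyAvg (fun _ => intervalIntegrable_one_div_pow_add_pow ht)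
    (fun _ => one_div_pow_add_pow_mem_Icc ht) hb

theorem intervalIntegrable_hardyAvg_hardyAvg_one_div_pow_add_pow (ht : 0 < t) {b : ℝ}
    (hb : 0 ≤ b) :
    IntervalIntegrable (hardyAvg (hardyAvg fun u => 1 / (u ^ i + t ^ i))) volume 0 b :=
  intervalIntegrable_hardyAvg (fun _ => intervalIntegrable_hardyAvg_one_div_pow_add_pow ht)
    (fun _ => hardyAvg_one_div_pow_add_pow_mem_Icc ht) hb

theorem hardyAvg_hardyAvg_one_div_pow_add_pow_le (hi : 1 < i) (ht : 0 < t) {a : ℝ}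
    (hta : t ≤ a) :
    hardyAvg (hardyAvg fun u => 1 / (u ^ i + t ^ i)) a ≤
      a⁻¹ * (t / t ^ i + 2 * (t / t ^ i) * log (a / t)) := by
  have hfar : ∀ u ∈ Icc t a,
      hardyAvg (fun u => 1 / (u ^ i + t ^ i)) u ≤ u⁻¹ * (2 * (t / t ^ i)) := fun u hu =>
    mul_le_mul_of_nonneg_left (integral_one_div_pow_add_pow_le hi ht hu.1)
      (inv_nonneg.2 (ht.le.trans hu.1))
  refine mul_le_mul_of_nonneg_left ?_ (inv_nonneg.2 (ht.le.trans hta))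
  calc ∫ u in 0..a, hardyAvg (fun u => 1 / (u ^ i + t ^ i)) u
      ≤ 1 / t ^ i * t + ∫ u in t..a, u⁻¹ * (2 * (t / t ^ i)) :=
        integral_le_mul_add_integral ht.le hta
          (intervalIntegrable_hardyAvg_one_div_pow_add_pow ht (ht.le.trans hta))
          ((intervalIntegrable_inv_iff.2
            (Or.inr (notMem_uIcc_of_lt ht (ht.trans_le hta)))).mul_const _)
          (fun u hu => (hardyAvg_one_div_pow_add_pow_mem_Icc ht hu.1).2) hfar
    _ = t / t ^ i + 2 * (t / t ^ i) * log (a / t) := by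
        rw [intervalIntegral.integral_mul_const, integral_inv_of_pos ht (ht.trans_le hta)]
        ring

theorem le_hardyAvg_hardyAvg_one_div_pow_add_pow (ht : 0 < t) {a : ℝ} (hta : t ≤ a) :
    a⁻¹ * (t / t ^ i / 2 * log (a / t)) ≤
      hardyAvg (hardyAvg fun u => 1 / (u ^ i + t ^ i)) a := by
  have hfar : ∀ u ∈ Icc t a,
      u⁻¹ * (t / t ^ i / 2) ≤ hardyAvg (fun u => 1 / (u ^ i + t ^ i)) u := fun u hu =>
    mul_le_mul_of_nonneg_left (le_integral_one_div_pow_add_pow ht hu.1)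
      (inv_nonneg.2 (ht.le.trans hu.1))
  refine mul_le_mul_of_nonneg_left ?_ (inv_nonneg.2 (ht.le.trans hta))
  calc t / t ^ i / 2 * log (a / t) = ∫ u in t..a, u⁻¹ * (t / t ^ i / 2) := by
        rw [intervalIntegral.integral_mul_const, integral_inv_of_pos ht (ht.trans_le hta)]
        ring
    _ ≤ ∫ u in 0..a, hardyAvg (fun u => 1 / (u ^ i + t ^ i)) u :=
        integral_le_integral_of_le_on_subinterval ht.le hta le_rfl
          (intervalIntegrable_hardyAvg_one_div_pow_add_pow ht (ht.le.trans hta))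
          ((intervalIntegrable_inv_iff.2
            (Or.inr (notMem_uIcc_of_lt ht (ht.trans_le hta)))).mul_const _)
          (fun u hu => (hardyAvg_one_div_pow_add_pow_mem_Icc ht hu.1).1) hfar

theorem integral_hardyAvg_hardyAvg_one_div_pow_add_pow_le (hi : 1 < i) (ht : 0 < t)
    (ht1 : t ≤ 1) :
    ∫ x in 0..1, hardyAvg (hardyAvg fun u => 1 / (u ^ i + t ^ i)) x ≤
      t / t ^ i * (1 + log (1 / t) + log (1 / t) ^ 2) := by
  calc ∫ x in 0..1, hardyAvg (hardyAvg fun u => 1 / (u ^ i + t ^ i)) x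
      ≤ 1 / t ^ i * t + ∫ u in t..1, u⁻¹ * (t / t ^ i + 2 * (t / t ^ i) * log (u / t)) :=
        integral_le_mul_add_integral ht.le ht1
          (intervalIntegrable_hardyAvg_hardyAvg_one_div_pow_add_pow ht zero_le_one)
          (intervalIntegrable_inv_mul_add_mul_log ht ht1 _ _)
          (fun u hu => (hardyAvg_mem_Icc (fun _ => hardyAvg_one_div_pow_add_pow_mem_Icc ht)
            hu.1).2)
          (fun u hu => hardyAvg_hardyAvg_one_div_pow_add_pow_le hi ht hu.1)
    _ = t / t ^ i * (1 + log (1 / t) + log (1 / t) ^ 2) := by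
        rw [integral_inv_mul_add_mul_log ht ht1]; ring

theorem le_integral_hardyAvg_hardyAvg_one_div_pow_add_pow (ht : 0 < t) (ht1 : t ≤ 1) :
    t / t ^ i / 4 * log (1 / t) ^ 2 ≤
      ∫ x in 0..1, hardyAvg (hardyAvg fun u => 1 / (u ^ i + t ^ i)) x := by
  calc t / t ^ i / 4 * log (1 / t) ^ 2
      = ∫ u in t..1, u⁻¹ * (0 + t / t ^ i / 2 * log (u / t)) := by
        rw [integral_inv_mul_add_mul_log ht ht1]; ring
    _ ≤ _ :=
        integral_le_integral_of_le_on_subinterval ht.le ht1 le_rfl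
          (intervalIntegrable_hardyAvg_hardyAvg_one_div_pow_add_pow ht zero_le_one)
          (intervalIntegrable_inv_mul_add_mul_log ht ht1 _ _)
          (fun u hu => (hardyAvg_mem_Icc (fun _ => hardyAvg_one_div_pow_add_pow_mem_Icc ht)
            hu.1).1)
          (fun u hu => by rw [zero_add]; exact le_hardyAvg_hardyAvg_one_div_pow_add_pow ht hu.1)

theorem integral_hardyAvg_hardyAvg_one_div_pow_add_pow_mem_Icc (hi : 1 < i) (ht : 0 < t)
    (hL : 1 ≤ log (1 / t)) :
    ∫ x in 0..1, hardyAvg (hardyAvg fun u => 1 / (u ^ i + t ^ i)) x ∈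
      Icc (t / t ^ i / 4 * log (1 / t) ^ 2) (3 * (t / t ^ i) * log (1 / t) ^ 2) := by
  have ht1 : t ≤ 1 := by
    have : 1 < 1 / t := (log_pos_iff (by positivity)).1 (by linarith)
    exact ((one_lt_div ht).1 this).le
  refine ⟨le_integral_hardyAvg_hardyAvg_one_div_pow_add_pow ht ht1,
    (integral_hardyAvg_hardyAvg_one_div_pow_add_pow_le hi ht ht1).trans ?_⟩
  have : 1 + log (1 / t) + log (1 / t) ^ 2 ≤ 3 * log (1 / t) ^ 2 := by nlinarith
  calc t / t ^ i * (1 + log (1 / t) + log (1 / t) ^ 2) ≤ t / t ^ i * (3 * log (1 / t) ^ 2) := by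
        gcongr
    _ = 3 * (t / t ^ i) * log (1 / t) ^ 2 := by ring

end Kernel

/-- Theorem 4.4, Case 4: for an integer `i > 1`,
`∫₀¹ ∫₀¹ ∫₀¹ 1/((x₁·x₂·x₃)^i + q) dx₃ dx₂ dx₁ = Θ(q^(−1 + 1/i)·(log q)²)`
as `q → 0⁺`. -/
theorem three_dim_monomial_scaling_equal_gt_one (i : ℕ) (hi : 1 < i) :
    IsThetaAtZero
      (fun q : ℝ => ∫ x₁ in (0:ℝ)..1, ∫ x₂ in (0:ℝ)..1, ∫ x₃ in (0:ℝ)..1,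
        1 / ((x₁ * x₂ * x₃) ^ i + q))
      (fun q : ℝ => q ^ (-1 + 1/(i:ℝ)) * (Real.log q) ^ 2) := by
  have hi₁ : (1 : ℝ) ≤ i := by exact_mod_cast hi.le
  refine ⟨1 / (4 * (i : ℝ) ^ 2), 3, exp (-(i : ℝ)), by positivity, ?_, exp_pos _,
    fun q hq hq₀ => ?_⟩
  · rw [div_le_iff₀ (by positivity)]; nlinarith
  set t := q ^ (1 / (i : ℝ)) with ht_def
  have ht : 0 < t := rpow_pos_of_pos hq _
  have hq_eq : t ^ i = q := by
    rw [← rpow_natCast, ← rpow_mul hq.le, one_div_mul_cancel (by positivity), rpow_one]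
  have hC : t / t ^ i = q ^ (-1 + 1 / (i : ℝ)) := by
    rw [hq_eq, rpow_add hq, rpow_neg_one, ← ht_def, div_eq_inv_mul]
  have hlog_q : log q = -(i * log (1 / t)) := by
    rw [one_div, log_inv, ht_def, log_rpow hq]; field_simp
  have hL : 1 ≤ log (1 / t) := by
    have : log q < -i := by simpa using log_lt_log hq hq₀
    nlinarith
  have hI : (∫ x₁ in (0:ℝ)..1, ∫ x₂ in (0:ℝ)..1, ∫ x₃ in (0:ℝ)..1,
      1 / ((x₁ * x₂ * x₃) ^ i + q)) =
      ∫ x in 0..1, hardyAvg (hardyAvg fun u => 1 / (u ^ i + t ^ i)) x := by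
    rw [← integral_integral_integral_mul_eq_integral_hardyAvg, hq_eq]
  obtain ⟨hlower, hupper⟩ := integral_hardyAvg_hardyAvg_one_div_pow_add_pow_mem_Icc hi ht hL
  simp only [hI, ← hC, hlog_q]
  constructor
  · calc 1 / (4 * (i : ℝ) ^ 2) * (t / t ^ i * (-(i * log (1 / t))) ^ 2)
        = t / t ^ i / 4 * log (1 / t) ^ 2 := by field_simp
      _ ≤ _ := hlower
  · refine hupper.trans (le_of_sub_nonneg ?_)
    have : 0 ≤ t / t ^ i * log (1 / t) ^ 2 := by positivity
    nlinarith [mul_nonneg this (sub_nonneg.2 (one_le_pow₀ (n := 2) hi₁))]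
end

section
/- The triple integral ∫₀¹ ∫₀¹ ∫₀¹ 1/(x₁·x₂·x₃ + q) dx₃ dx₂ dx₁ satisfies ∫₀¹ ∫₀¹ ∫₀¹ 1/(x₁·x₂·x₃ + q) dx₃ dx₂ dx₁ = Θ((−log q)³) as q → 0⁺. -/
open MeasureTheory Filter Topology

namespace ThetaAux

open Set intervalIntegral

noncomputable def L (a : ℝ) : ℝ := Real.log (1 + a) - Real.log a

lemma integral_one_div_add {a : ℝ} (ha : 0 < a) :
    ∫ x in (0:ℝ)..1, 1 / (x + a) = L a := by
  have h : (∫ x in (0:ℝ)..1, 1 / (x + a)) = ∫ x in (0+a)..(1+a), 1 / x :=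
    intervalIntegral.integral_comp_add_right (fun x => 1 / x) a
  have hne : (0:ℝ) ∉ Set.uIcc (0+a) (1+a) := by
    rw [Set.uIcc_of_le (by linarith)]
    intro hmem
    exact absurd hmem.1 (by linarith)
  rw [h, integral_one_div hne, zero_add, Real.log_div (ne_of_gt (by linarith)) (ne_of_gt ha), L]

lemma intInt_inv_add {a : ℝ} (ha : 0 < a) :
    IntervalIntegrable (fun x : ℝ => 1 / (x + a)) volume 0 1 := by
  apply ContinuousOn.intervalIntegrable
  rw [uIcc_of_le zero_le_one]
  exact ContinuousOn.div continuousOn_const (by fun_prop)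
    (fun x hx => by have := hx.1; positivity)

lemma intInt_F {q x₁ x₂ : ℝ} (hq : 0 < q) (h1 : 0 ≤ x₁) (h2 : 0 ≤ x₂) :
    IntervalIntegrable (fun t : ℝ => 1 / (x₁ * x₂ * t + q)) volume 0 1 := by
  apply ContinuousOn.intervalIntegrable
  rw [uIcc_of_le zero_le_one]
  exact ContinuousOn.div continuousOn_const (by fun_prop)
    (fun t ht => by have := ht.1; positivity)

lemma cont_Fmid {q : ℝ} (hq : 0 < q) :
    Continuous (fun p : ℝ × ℝ => ∫ t in (0:ℝ)..1, 1 / (|p.1| * |p.2| * |t| + q)) := by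
  apply intervalIntegral.continuous_parametric_intervalIntegral_of_continuous'
  apply Continuous.div continuous_const (by fun_prop)
  rintro ⟨⟨a, b⟩, t⟩
  have : (0:ℝ) ≤ |a| * |b| * |t| := by positivity
  dsimp only [Function.uncurry]
  positivity

lemma Fmid_eq {q x₁ x₂ : ℝ} (h1 : 0 ≤ x₁) (h2 : 0 ≤ x₂) :
    (∫ t in (0:ℝ)..1, 1 / (x₁ * x₂ * t + q))
      = ∫ t in (0:ℝ)..1, 1 / (|x₁| * |x₂| * |t| + q) := by
  apply intervalIntegral.integral_congr
  intro t ht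
  rw [uIcc_of_le zero_le_one] at ht
  show 1 / (x₁ * x₂ * t + q) = 1 / (|x₁| * |x₂| * |t| + q)
  rw [abs_of_nonneg h1, abs_of_nonneg h2, abs_of_nonneg ht.1]

lemma intInt_Fmid {q x₁ : ℝ} (hq : 0 < q) (h1 : 0 ≤ x₁) :
    IntervalIntegrable (fun x₂ : ℝ => ∫ t in (0:ℝ)..1, 1 / (x₁ * x₂ * t + q)) volume 0 1 := by
  apply ContinuousOn.intervalIntegrable
  rw [uIcc_of_le zero_le_one]
  have hc : Continuous (fun x₂ : ℝ => ∫ t in (0:ℝ)..1, 1 / (|x₁| * |x₂| * |t| + q)) :=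
    (cont_Fmid hq).comp (continuous_const.prodMk continuous_id)
  exact hc.continuousOn.congr (fun x₂ hx₂ => Fmid_eq h1 hx₂.1)

lemma intInt_Fout {q : ℝ} (hq : 0 < q) :
    IntervalIntegrable
      (fun x₁ : ℝ => ∫ x₂ in (0:ℝ)..1, ∫ t in (0:ℝ)..1, 1 / (x₁ * x₂ * t + q)) volume 0 1 := by
  apply ContinuousOn.intervalIntegrable
  rw [uIcc_of_le zero_le_one]
  have hc : Continuous (fun x₁ : ℝ => ∫ x₂ in (0:ℝ)..1, ∫ t in (0:ℝ)..1,
      1 / (|x₁| * |x₂| * |t| + q)) := by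
    apply intervalIntegral.continuous_parametric_intervalIntegral_of_continuous'
      (f := fun x₁ x₂ => ∫ t in (0:ℝ)..1, 1 / (|x₁| * |x₂| * |t| + q))
    exact cont_Fmid hq
  apply hc.continuousOn.congr
  intro x₁ hx₁
  apply intervalIntegral.integral_congr
  intro x₂ hx₂
  rw [uIcc_of_le zero_le_one] at hx₂
  exact Fmid_eq hx₁.1 hx₂.1

lemma nested_upper {q a c : ℝ} (hq : 0 < q) (ha : 0 < a)
    (hpt : ∀ x₁ ∈ Icc (0:ℝ) 1, ∀ x₂ ∈ Icc (0:ℝ) 1, ∀ x₃ ∈ Icc (0:ℝ) 1,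
      1 / (x₁ * x₂ * x₃ + q) ≤ c * (1 / (x₁ + a) * (1 / (x₂ + a) * (1 / (x₃ + a))))) :
    (∫ x₁ in (0:ℝ)..1, ∫ x₂ in (0:ℝ)..1, ∫ x₃ in (0:ℝ)..1, 1 / (x₁ * x₂ * x₃ + q))
      ≤ c * (L a) ^ 3 := by
  have hG3 : ∀ x₁ x₂ : ℝ,
      (∫ x₃ in (0:ℝ)..1, c * (1 / (x₁ + a) * (1 / (x₂ + a) * (1 / (x₃ + a)))))
        = c * (1 / (x₁ + a) * (1 / (x₂ + a) * L a)) := by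
    intro x₁ x₂
    simp only [intervalIntegral.integral_const_mul, integral_one_div_add ha]
  have hG2 : ∀ x₁ : ℝ,
      (∫ x₂ in (0:ℝ)..1, c * (1 / (x₁ + a) * (1 / (x₂ + a) * L a)))
        = c * (1 / (x₁ + a) * (L a * L a)) := by
    intro x₁
    simp only [intervalIntegral.integral_const_mul, intervalIntegral.integral_mul_const,
      integral_one_div_add ha]
  have step1 : ∀ x₁ ∈ Icc (0:ℝ) 1, ∀ x₂ ∈ Icc (0:ℝ) 1,
      (∫ x₃ in (0:ℝ)..1, 1 / (x₁ * x₂ * x₃ + q))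
        ≤ c * (1 / (x₁ + a) * (1 / (x₂ + a) * L a)) := by
    intro x₁ h₁ x₂ h₂
    rw [← hG3]
    exact intervalIntegral.integral_mono_on zero_le_one (intInt_F hq h₁.1 h₂.1)
      ((((intInt_inv_add ha).const_mul _).const_mul _).const_mul c) (hpt x₁ h₁ x₂ h₂)
  have step2 : ∀ x₁ ∈ Icc (0:ℝ) 1,
      (∫ x₂ in (0:ℝ)..1, ∫ x₃ in (0:ℝ)..1, 1 / (x₁ * x₂ * x₃ + q))
        ≤ c * (1 / (x₁ + a) * (L a * L a)) := by
    intro x₁ h₁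
    rw [← hG2]
    exact intervalIntegral.integral_mono_on zero_le_one (intInt_Fmid hq h₁.1)
      ((((intInt_inv_add ha).mul_const _).const_mul _).const_mul c) (step1 x₁ h₁)
  calc (∫ x₁ in (0:ℝ)..1, ∫ x₂ in (0:ℝ)..1, ∫ x₃ in (0:ℝ)..1, 1 / (x₁ * x₂ * x₃ + q))
      ≤ ∫ x₁ in (0:ℝ)..1, c * (1 / (x₁ + a) * (L a * L a)) :=
        intervalIntegral.integral_mono_on zero_le_one (intInt_Fout hq)
          ((((intInt_inv_add ha).mul_const _).const_mul c)) step2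
    _ = c * (L a) ^ 3 := by
        simp only [intervalIntegral.integral_const_mul, intervalIntegral.integral_mul_const,
          integral_one_div_add ha]
        ring

lemma nested_lower {q a c : ℝ} (hq : 0 < q) (ha : 0 < a)
    (hpt : ∀ x₁ ∈ Icc (0:ℝ) 1, ∀ x₂ ∈ Icc (0:ℝ) 1, ∀ x₃ ∈ Icc (0:ℝ) 1,
      c * (1 / (x₁ + a) * (1 / (x₂ + a) * (1 / (x₃ + a)))) ≤ 1 / (x₁ * x₂ * x₃ + q)) :
    c * (L a) ^ 3
      ≤ ∫ x₁ in (0:ℝ)..1, ∫ x₂ in (0:ℝ)..1, ∫ x₃ in (0:ℝ)..1, 1 / (x₁ * x₂ * x₃ + q) := by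
  have hG3 : ∀ x₁ x₂ : ℝ,
      (∫ x₃ in (0:ℝ)..1, c * (1 / (x₁ + a) * (1 / (x₂ + a) * (1 / (x₃ + a)))))
        = c * (1 / (x₁ + a) * (1 / (x₂ + a) * L a)) := by
    intro x₁ x₂
    simp only [intervalIntegral.integral_const_mul, integral_one_div_add ha]
  have hG2 : ∀ x₁ : ℝ,
      (∫ x₂ in (0:ℝ)..1, c * (1 / (x₁ + a) * (1 / (x₂ + a) * L a)))
        = c * (1 / (x₁ + a) * (L a * L a)) := by
    intro x₁
    simp only [intervalIntegral.integral_const_mul, intervalIntegral.integral_mul_const,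
      integral_one_div_add ha]
  have step1 : ∀ x₁ ∈ Icc (0:ℝ) 1, ∀ x₂ ∈ Icc (0:ℝ) 1,
      c * (1 / (x₁ + a) * (1 / (x₂ + a) * L a))
        ≤ ∫ x₃ in (0:ℝ)..1, 1 / (x₁ * x₂ * x₃ + q) := by
    intro x₁ h₁ x₂ h₂
    rw [← hG3]
    exact intervalIntegral.integral_mono_on zero_le_one
      ((((intInt_inv_add ha).const_mul _).const_mul _).const_mul c)
      (intInt_F hq h₁.1 h₂.1) (hpt x₁ h₁ x₂ h₂)
  have step2 : ∀ x₁ ∈ Icc (0:ℝ) 1,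
      c * (1 / (x₁ + a) * (L a * L a))
        ≤ ∫ x₂ in (0:ℝ)..1, ∫ x₃ in (0:ℝ)..1, 1 / (x₁ * x₂ * x₃ + q) := by
    intro x₁ h₁
    rw [← hG2]
    exact intervalIntegral.integral_mono_on zero_le_one
      ((((intInt_inv_add ha).mul_const _).const_mul _).const_mul c)
      (intInt_Fmid hq h₁.1) (step1 x₁ h₁)
  calc c * (L a) ^ 3
      = ∫ x₁ in (0:ℝ)..1, c * (1 / (x₁ + a) * (L a * L a)) := by
        simp only [intervalIntegral.integral_const_mul, intervalIntegral.integral_mul_const,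
          integral_one_div_add ha]
        ring
    _ ≤ _ :=
        intervalIntegral.integral_mono_on zero_le_one
          ((((intInt_inv_add ha).mul_const _).const_mul c)) (intInt_Fout hq) step2

lemma pt_upper {q x₁ x₂ x₃ : ℝ} (hq : 0 < q) (hq1 : q ≤ 1)
    (h₁ : x₁ ∈ Icc (0:ℝ) 1) (h₂ : x₂ ∈ Icc (0:ℝ) 1) (h₃ : x₃ ∈ Icc (0:ℝ) 1) :
    1 / (x₁ * x₂ * x₃ + q) ≤ 7 * (1 / (x₁ + q) * (1 / (x₂ + q) * (1 / (x₃ + q)))) := by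
  obtain ⟨a1, b1⟩ := h₁; obtain ⟨a2, b2⟩ := h₂; obtain ⟨a3, b3⟩ := h₃
  have hD : 0 < x₁ * x₂ * x₃ + q := by positivity
  have hP : 0 < (x₁ + q) * ((x₂ + q) * (x₃ + q)) := by positivity
  have key : (x₁ + q) * ((x₂ + q) * (x₃ + q)) ≤ 7 * (x₁ * x₂ * x₃ + q) := by
    nlinarith [mul_nonneg a1 a2, mul_nonneg a2 a3, mul_nonneg a1 a3,
      mul_le_one₀ b1 a2 b2, mul_le_one₀ b2 a3 b3, mul_le_one₀ b1 a3 b3,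
      sq_nonneg q, mul_pos hq hq]
  have heq : 7 * (1 / (x₁ + q) * (1 / (x₂ + q) * (1 / (x₃ + q))))
      = 7 / ((x₁ + q) * ((x₂ + q) * (x₃ + q))) := by
    field_simp
  rw [heq, div_le_div_iff₀ hD hP]
  linarith

lemma pt_lower {q r x₁ x₂ x₃ : ℝ} (hq : 0 < q) (hr : 0 < r) (hr3 : r ^ 3 = q)
    (h₁ : x₁ ∈ Icc (0:ℝ) 1) (h₂ : x₂ ∈ Icc (0:ℝ) 1) (h₃ : x₃ ∈ Icc (0:ℝ) 1) :
    1 * (1 / (x₁ + r) * (1 / (x₂ + r) * (1 / (x₃ + r)))) ≤ 1 / (x₁ * x₂ * x₃ + q) := by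
  obtain ⟨a1, _⟩ := h₁; obtain ⟨a2, _⟩ := h₂; obtain ⟨a3, _⟩ := h₃
  have hD : 0 < x₁ * x₂ * x₃ + q := by positivity
  have key : x₁ * x₂ * x₃ + q ≤ (x₁ + r) * ((x₂ + r) * (x₃ + r)) := by
    nlinarith [mul_nonneg a1 a2, mul_nonneg a2 a3, mul_nonneg a1 a3,
      mul_nonneg (mul_nonneg a1 a2) hr.le, mul_nonneg (mul_nonneg a2 a3) hr.le,
      mul_nonneg (mul_nonneg a1 a3) hr.le,
      mul_nonneg a1 (mul_pos hr hr).le, mul_nonneg a2 (mul_pos hr hr).le,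
      mul_nonneg a3 (mul_pos hr hr).le]
  have heq : 1 * (1 / (x₁ + r) * (1 / (x₂ + r) * (1 / (x₃ + r))))
      = 1 / ((x₁ + r) * ((x₂ + r) * (x₃ + r))) := by field_simp
  rw [heq]
  exact one_div_le_one_div_of_le hD key

end ThetaAux

/-- Theorem 4.4, Case 8:
`∫₀¹ ∫₀¹ ∫₀¹ 1/(x₁·x₂·x₃ + q) dx₃ dx₂ dx₁ = Θ((−log q)³)` as `q → 0⁺`. -/
theorem three_dim_monomial_scaling_all_one :
    IsThetaAtZero
      (fun q : ℝ => ∫ x₁ in (0:ℝ)..1, ∫ x₂ in (0:ℝ)..1, ∫ x₃ in (0:ℝ)..1,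
        1 / (x₁ * x₂ * x₃ + q))
      (fun q : ℝ => (-Real.log q) ^ 3) := by
  refine ⟨1/27, 56, 1/2, by norm_num, by norm_num, by norm_num, ?_⟩
  intro q hq hq2
  have hq1 : q < 1 := by linarith
  have hlogq : Real.log q < 0 := Real.log_neg hq hq1
  constructor
  · -- lower bound
    set r : ℝ := q ^ ((3:ℝ)⁻¹) with hr_def
    have hr : 0 < r := Real.rpow_pos_of_pos hq _
    have hr3 : r ^ 3 = q := by
      rw [hr_def, ← Real.rpow_natCast (q ^ ((3:ℝ)⁻¹)) 3, ← Real.rpow_mul hq.le]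
      norm_num
    have hlogr : Real.log r = 3⁻¹ * Real.log q := Real.log_rpow hq _
    have hLr : (-Real.log q) / 3 ≤ ThetaAux.L r := by
      have h1 : 0 ≤ Real.log (1 + r) := Real.log_nonneg (by linarith)
      rw [ThetaAux.L, hlogr]
      linarith
    have hbase : 0 ≤ (-Real.log q) / 3 := by linarith
    have hpow : ((-Real.log q) / 3) ^ 3 ≤ (ThetaAux.L r) ^ 3 :=
      pow_le_pow_left₀ hbase hLr 3
    have := ThetaAux.nested_lower hq hr
      (fun x₁ h₁ x₂ h₂ x₃ h₃ => ThetaAux.pt_lower hq hr hr3 h₁ h₂ h₃)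
    calc (1/27 : ℝ) * (-Real.log q) ^ 3 = ((-Real.log q) / 3) ^ 3 := by ring
      _ ≤ (ThetaAux.L r) ^ 3 := hpow
      _ = 1 * (ThetaAux.L r) ^ 3 := by ring
      _ ≤ _ := this
  · -- upper bound
    have hupper := ThetaAux.nested_upper hq hq
      (fun x₁ h₁ x₂ h₂ x₃ h₃ => ThetaAux.pt_upper hq hq1.le h₁ h₂ h₃)
    have hL0 : 0 ≤ ThetaAux.L q := by
      have h1 : 0 ≤ Real.log (1 + q) := Real.log_nonneg (by linarith)
      rw [ThetaAux.L]; linarith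
    have hLle : ThetaAux.L q ≤ 2 * (-Real.log q) := by
      have h1 : Real.log (1 + q) ≤ Real.log 2 :=
        Real.log_le_log (by linarith) (by linarith)
      have h2 : Real.log 2 ≤ Real.log (1/q) :=
        Real.log_le_log (by norm_num) (by rw [le_div_iff₀ hq]; linarith)
      have h3 : Real.log (1/q) = -Real.log q := by
        rw [one_div, Real.log_inv]
      rw [ThetaAux.L]
      linarith
    have hpow : (ThetaAux.L q) ^ 3 ≤ (2 * (-Real.log q)) ^ 3 :=
      pow_le_pow_left₀ hL0 hLle 3
    calc (∫ x₁ in (0:ℝ)..1, ∫ x₂ in (0:ℝ)..1, ∫ x₃ in (0:ℝ)..1, 1 / (x₁ * x₂ * x₃ + q))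
        ≤ 7 * (ThetaAux.L q) ^ 3 := hupper
      _ ≤ 7 * (2 * (-Real.log q)) ^ 3 := by linarith
      _ = 56 * (-Real.log q) ^ 3 := by ring
end

section
/- Let m ≥ 0 be an integer. Then the quantity ∫₀^{1/q} z·(log z)^m/(z + 1)² dz, divided by (1/(m+1))·(log(1/q))^{m+1}, tends to 1 as q → 0⁺; in particular ∫₀^{1/q} z·(log z)^m/(z + 1)² dz = Θ((−log q)^{m+1}) as q → 0⁺. -/
/-! For `z ≥ 1` the integrand differs from `(log z)^m / z`, whose integral over `[1, x]` is
`(log x)^(m+1) / (m+1)`, by `(log z)^m (2z+1) / (z (z+1)^2) = O(z^(-3/2))`, which is integrable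
on `(1, ∞)`; on `(0, 1]` the integrand is bounded because `z |log z|^m` is. So
`∫₀ˣ - (log x)^(m+1) / (m+1)` converges as `x → ∞`, the integral is asymptotically equivalent to
`(log x)^(m+1) / (m+1)`, and `x = 1/q` gives both claims. -/

open MeasureTheory Filter Topology

open Real Set Asymptotics intervalIntegral

noncomputable def integrand (m : ℕ) (z : ℝ) : ℝ := z * log z ^ m / (z + 1) ^ 2

theorem mul_abs_log_pow_le {z : ℝ} (hz₀ : 0 < z) (hz₁ : z ≤ 1) (m : ℕ) :
    z * |log z| ^ m ≤ (m + 1) ^ m := by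
  set t : ℝ := ((m + 1 : ℕ) : ℝ)⁻¹
  have hzt : 0 < z ^ t := rpow_pos_of_pos hz₀ t
  have hz : z = z ^ t * (z ^ t) ^ m := by
    rw [← pow_succ', rpow_inv_natCast_pow hz₀.le m.succ_ne_zero]
  have hlog : |log z * z ^ t| < m + 1 := by
    simpa [t] using abs_log_mul_self_rpow_lt z t hz₀ hz₁ (by positivity)
  calc z * |log z| ^ m = z ^ t * |log z * z ^ t| ^ m := by
        rw [abs_mul, abs_of_pos hzt, mul_pow]
        nth_rewrite 1 [hz]
        ring
    _ ≤ 1 * (m + 1) ^ m := by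
        gcongr
        exact rpow_le_one hz₀.le hz₁ (by positivity)
    _ = (m + 1) ^ m := one_mul _

theorem continuousOn_integrand (m : ℕ) : ContinuousOn (integrand m) (Ioi 0) := by
  intro z (hz : 0 < z)
  unfold integrand
  exact ((continuousAt_id.mul ((continuousAt_log hz.ne').pow m)).div (by fun_prop)
    (by positivity)).continuousWithinAt

theorem intervalIntegrable_integrand_zero_one (m : ℕ) :
    IntervalIntegrable (integrand m) volume 0 1 := by
  refine (intervalIntegrable_const (c := ((m : ℝ) + 1) ^ m)).mono_fun' ?_ ?_
  · exact Measurable.aestronglyMeasurable (by unfold integrand; fun_prop)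
  · rw [EventuallyLE, ae_restrict_iff' measurableSet_uIoc]
    refine ae_of_all _ fun z hz => ?_
    rw [uIoc_of_le zero_le_one] at hz
    have hden : 1 ≤ (z + 1) ^ 2 := by nlinarith [hz.1]
    calc ‖integrand m z‖ = z * |log z| ^ m / (z + 1) ^ 2 := by
          rw [integrand, Real.norm_eq_abs, abs_div, abs_mul, abs_pow, abs_pow, abs_of_pos hz.1,
            abs_of_pos (by linarith [hz.1] : 0 < z + 1)]
      _ ≤ z * |log z| ^ m := div_le_self (by positivity [hz.1]) hden
      _ ≤ (m + 1) ^ m := mul_abs_log_pow_le hz.1 hz.2 m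

theorem integral_log_pow_div {x : ℝ} (hx : 0 < x) (m : ℕ) :
    ∫ z in 1..x, log z ^ m / z = 1 / (m + 1) * log x ^ (m + 1) := by
  have hpos : ∀ z ∈ uIcc 1 x, 0 < z := fun z hz => (lt_min one_pos hx).trans_le hz.1
  have hsubst := integral_comp_mul_deriv (fun z hz => hasDerivAt_log (hpos z hz).ne')
    (continuousOn_inv₀.mono fun z hz => (hpos z hz).ne') (continuous_pow m)
  simp only [Function.comp_def, log_one, integral_pow, ← div_eq_mul_inv] at hsubst
  rw [hsubst, zero_pow m.succ_ne_zero, sub_zero, div_eq_inv_mul, one_div]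

theorem log_pow_div_sub_integrand {z : ℝ} (hz : 0 < z) (m : ℕ) :
    log z ^ m / z - integrand m z = log z ^ m * ((2 * z + 1) / (z * (z + 1) ^ 2)) := by
  unfold integrand
  field_simp
  ring

theorem isBigO_two_mul_add_one_div_rpow_neg_two :
    (fun z : ℝ => (2 * z + 1) / (z * (z + 1) ^ 2)) =O[atTop] fun z => z ^ (-2 : ℝ) := by
  refine IsBigO.of_bound 3 ?_
  filter_upwards [eventually_ge_atTop 1] with z hz
  have hz₀ : 0 < z := one_pos.trans_le hz
  rw [Real.norm_of_nonneg (by positivity), Real.norm_of_nonneg (by positivity), rpow_neg hz₀.le,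
    rpow_two, div_le_iff₀ (by positivity)]
  field_simp
  nlinarith

theorem integrableOn_log_pow_div_sub_integrand (m : ℕ) :
    IntegrableOn (fun z => log z ^ m / z - integrand m z) (Ioi 1) := by
  have hcont : ContinuousOn (fun z => log z ^ m / z - integrand m z) (Ici 1) := by
    intro z (hz : 1 ≤ z)
    replace hz : 0 < z := one_pos.trans_le hz
    exact ((((continuousAt_log hz.ne').pow m).div continuousAt_id hz.ne').sub
      ((continuousOn_integrand m).continuousAt (Ioi_mem_nhds hz))).continuousWithinAt
  have hlog : (fun z => log z ^ m) =o[atTop] fun z => z ^ (1 / 2 : ℝ) := by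
    simpa only [rpow_natCast] using
      isLittleO_log_rpow_rpow_atTop (m : ℝ) (by norm_num : (0 : ℝ) < 1 / 2)
  have hO : (fun z => log z ^ m / z - integrand m z) =O[atTop] fun z => z ^ (-3 / 2 : ℝ) := by
    refine ((hlog.mul_isBigO isBigO_two_mul_add_one_div_rpow_neg_two).isBigO.congr' ?_ ?_)
    · filter_upwards [eventually_gt_atTop 0] with z hz
      exact (log_pow_div_sub_integrand hz m).symm
    · filter_upwards [eventually_gt_atTop 0] with z hz
      rw [← rpow_add hz]
      norm_num
  exact ((hcont.locallyIntegrableOn measurableSet_Ici).integrableOn_of_isBigO_atTop hO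
    (integrableAtFilter_rpow_atTop_iff.mpr (by norm_num))).mono_set Ioi_subset_Ici_self

theorem tendsto_integral_integrand_sub_log_pow (m : ℕ) :
    Tendsto (fun x => (∫ z in 0..x, integrand m z) - 1 / (m + 1) * log x ^ (m + 1)) atTop
      (𝓝 ((∫ z in 0..1, integrand m z) - ∫ z in Ioi 1, (log z ^ m / z - integrand m z))) := by
  refine ((intervalIntegral_tendsto_integral_Ioi 1 (integrableOn_log_pow_div_sub_integrand m)
    tendsto_id).const_sub _).congr' ?_
  filter_upwards [eventually_ge_atTop 1] with x hx
  have hsub : uIcc 1 x ⊆ Ioi 0 := fun z hz => one_pos.trans_le (by simpa [hx] using hz.1)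
  have hf : IntervalIntegrable (integrand m) volume 1 x :=
    ((continuousOn_integrand m).mono hsub).intervalIntegrable
  have hlog : IntervalIntegrable (fun z => log z ^ m / z) volume 1 x :=
    (((continuousOn_log.pow m).div continuousOn_id fun z hz => hz).mono
      fun z hz => (hsub hz).ne').intervalIntegrable
  rw [id, integral_sub hlog hf, integral_log_pow_div (one_pos.trans_le hx),
    ← integral_add_adjacent_intervals (intervalIntegrable_integrand_zero_one m) hf]
  ring

theorem integral_integrand_isEquivalent (m : ℕ) :
    (fun x => ∫ z in 0..x, integrand m z) ~[atTop] fun x => 1 / (m + 1) * log x ^ (m + 1) := by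
  have hlog : Tendsto (fun x => 1 / ((m : ℝ) + 1) * log x ^ (m + 1)) atTop atTop :=
    ((tendsto_pow_atTop m.succ_ne_zero).comp tendsto_log_atTop).const_mul_atTop (by positivity)
  exact ((tendsto_integral_integrand_sub_log_pow m).isBigO_one ℝ).trans_isLittleO
    ((isLittleO_one_left_iff ℝ).mpr (tendsto_norm_atTop_atTop.comp hlog))

theorem IsThetaAtZero.of_isEquivalent {I R : ℝ → ℝ} {c : ℝ} (hc : 0 < c)
    (hR : ∀ᶠ q in 𝓝[>] 0, 0 < R q) (h : I ~[𝓝[>] 0] fun q => c * R q) :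
    IsThetaAtZero I R := by
  have hratio := (isEquivalent_iff_tendsto_one (hR.mono fun q hq => (mul_pos hc hq).ne')).mp h
  have hbounds : ∀ᶠ q in 𝓝[>] 0, 0 < R q ∧ 1 / 2 < I q / (c * R q) ∧ I q / (c * R q) < 2 :=
    hR.and ((hratio.eventually (lt_mem_nhds (by norm_num))).and
      (hratio.eventually (gt_mem_nhds (by norm_num))))
  obtain ⟨q₀, hq₀, hsub⟩ := mem_nhdsGT_iff_exists_Ioo_subset.mp hbounds
  refine ⟨c / 2, 2 * c, q₀, by positivity, by linarith, hq₀, fun q hq hq' => ?_⟩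
  obtain ⟨hRq, hlow, hup⟩ := hsub ⟨hq, hq'⟩
  rw [lt_div_iff₀ (by positivity)] at hlow
  rw [div_lt_iff₀ (by positivity)] at hup
  constructor <;> nlinarith

/-- Appendix C: for every integer `m ≥ 0`, the quantity
`∫₀^{1/q} z·(log z)^m/(z+1)² dz`, divided by `(1/(m+1))·(log(1/q))^{m+1}`, tends to `1`
as `q → 0⁺`; in particular the integral is `Θ((−log q)^{m+1})` as `q → 0⁺`. -/
theorem appendix_integral_asymptotics (m : ℕ) :
    Tendsto
      (fun q : ℝ =>
        (∫ z in (0:ℝ)..(1/q), z * (Real.log z) ^ m / (z + 1) ^ 2) /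
          ((1 / ((m:ℝ) + 1)) * (Real.log (1/q)) ^ (m + 1)))
      (𝓝[>] (0:ℝ)) (𝓝 1) ∧
    IsThetaAtZero
      (fun q : ℝ => ∫ z in (0:ℝ)..(1/q), z * (Real.log z) ^ m / (z + 1) ^ 2)
      (fun q : ℝ => (-Real.log q) ^ (m + 1)) := by
  have hinv : Tendsto (fun q : ℝ => 1 / q) (𝓝[>] 0) atTop := by
    simpa only [one_div] using tendsto_inv_nhdsGT_zero
  have hequiv := (integral_integrand_isEquivalent m).comp_tendsto hinv
  have hR : ∀ᶠ q in 𝓝[>] (0 : ℝ), 0 < (-log q) ^ (m + 1) := by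
    filter_upwards [Ioo_mem_nhdsGT one_pos] with q hq
    exact pow_pos (neg_pos.mpr (log_neg hq.1 hq.2)) _
  have hlog_one_div (q : ℝ) :
      1 / ((m : ℝ) + 1) * log (1 / q) ^ (m + 1) = 1 / ((m : ℝ) + 1) * (-log q) ^ (m + 1) := by
    rw [one_div q, log_inv]
  refine ⟨(isEquivalent_iff_tendsto_one ?_).mp hequiv,
    IsThetaAtZero.of_isEquivalent (by positivity) hR
      (hequiv.congr_right (.of_forall hlog_one_div))⟩
  filter_upwards [hR] with q hq
  simp only [hlog_one_div]
  exact mul_ne_zero (by positivity) hq.ne'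
end
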